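/- arXiv:2008.12076 — 10 statements merged into one kernel-verified Lean document; each statement's English description precedes it below -/
import Mathlib

section
/- Let [n] be partitioned into regions P_1, …, P_K with d ≥ 0 and Γ ≥ 0, and let x ∈ {0,1}^n be fixed. Then the infimum over all π ∈ ℝ^K with π ≥ 0 of Σ_{j∈[K]} ( Γ_j π_j + Σ_{i∈P_j} d_i · max{ x_i − π_j, 0 } ) equals the minimum of the same expression over π ∈ {0,1}^K; in particular there is an optimal dual solution in which every π_j is 0 or 1 (Lemma 1 of the paper). -/
open Finset

/-- Lemma 1 of the paper. The infimum over `π ≥ 0` of the dual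
objective `∑ⱼ (Γⱼ πⱼ + ∑_{i ∈ Pⱼ} dᵢ [xᵢ - πⱼ]₊)` equals the minimum of the same
expression over `π ∈ {0,1}^K`; in particular there is an optimal dual solution
whose entries are all `0` or `1`. -/
theorem optimal_dual_binary_pi
    (n K : ℕ) (reg : Fin n → Fin K)
    (d : Fin n → ℝ) (Γ : Fin K → ℝ)
    (hd : ∀ i, 0 ≤ d i) (hΓ : ∀ j, 0 ≤ Γ j)
    (x : Fin n → ℝ) (hx : ∀ i, x i = 0 ∨ x i = 1) :
    ∃ m : ℝ,
      IsGLB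
        {v : ℝ | ∃ π : Fin K → ℝ, (∀ j, 0 ≤ π j) ∧
          v = ∑ j, (Γ j * π j +
            ∑ i ∈ univ.filter (fun i => reg i = j), d i * max (x i - π j) 0)} m ∧
      IsLeast
        {v : ℝ | ∃ π : Fin K → ℝ, (∀ j, π j = 0 ∨ π j = 1) ∧
          v = ∑ j, (Γ j * π j +
            ∑ i ∈ univ.filter (fun i => reg i = j), d i * max (x i - π j) 0)} m := by
  classical
  set g : Fin K → ℝ → ℝ := fun j t => Γ j * t +
      ∑ i ∈ univ.filter (fun i => reg i = j), d i * max (x i - t) 0 with hg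
  have hS1 : ∀ j, ∑ i ∈ univ.filter (fun i => reg i = j), d i * max (x i - 1) 0 = 0 := by
    intro j
    apply Finset.sum_eq_zero
    intro i _
    rcases hx i with h | h <;> simp [h]
  have hg1 : ∀ j, g j 1 = Γ j := by
    intro j; simp [hg, hS1 j]
  have hg0 : ∀ j, g j 0 = ∑ i ∈ univ.filter (fun i => reg i = j), d i * x i := by
    intro j
    simp only [hg, mul_zero, zero_add, sub_zero]
    apply Finset.sum_congr rfl
    intro i _
    rcases hx i with h | h <;> simp [h]
  have key : ∀ j, ∀ t : ℝ, 0 ≤ t → min (g j 0) (g j 1) ≤ g j t := by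
    intro j t ht
    rcases le_or_gt 1 t with h1 | h1
    · have hsum : (0:ℝ) ≤ ∑ i ∈ univ.filter (fun i => reg i = j), d i * max (x i - t) 0 :=
        Finset.sum_nonneg fun i _ => mul_nonneg (hd i) (le_max_right _ _)
      have h1' : g j 1 ≤ g j t := by
        rw [hg1 j]
        simp only [hg]
        nlinarith [hΓ j]
      exact le_trans (min_le_right _ _) h1'
    · have hmax : ∀ i, max (x i - t) 0 = x i * (1 - t) := by
        intro i
        rcases hx i with h | h
        · rw [h]; rw [max_eq_right (by linarith)]; ring
        · rw [h]; rw [max_eq_left (by linarith)]; ring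
      have hgt : g j t = t * g j 1 + (1 - t) * g j 0 := by
        rw [hg1 j, hg0 j]
        simp only [hg]
        rw [Finset.sum_congr rfl fun i _ => by rw [hmax i]]
        rw [Finset.mul_sum]
        rw [Finset.sum_congr rfl (fun i _ => by ring : ∀ i ∈ univ.filter (fun i => reg i = j),
          d i * (x i * (1 - t)) = (1 - t) * (d i * x i))]
        ring
      rw [hgt]
      have h2 := min_le_left (g j 0) (g j 1)
      have h3 := min_le_right (g j 0) (g j 1)
      nlinarith
  set π₀ : Fin K → ℝ := fun j => if g j 1 ≤ g j 0 then 1 else 0 with hπ₀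
  have hπ₀g : ∀ j, g j (π₀ j) = min (g j 0) (g j 1) := by
    intro j
    by_cases h : g j 1 ≤ g j 0
    · simp [hπ₀, h, min_eq_right h]
    · simp [hπ₀, h, min_eq_left (le_of_not_ge h)]
  refine ⟨∑ j, min (g j 0) (g j 1), ?_, ?_⟩
  · apply IsLeast.isGLB
    constructor
    · refine ⟨π₀, fun j => by by_cases h : g j 1 ≤ g j 0 <;> simp [hπ₀, h], ?_⟩
      rw [Finset.sum_congr rfl fun j _ => (hπ₀g j).symm]
    · rintro v ⟨π, hπ, rfl⟩
      exact Finset.sum_le_sum fun j _ => key j (π j) (hπ j)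
  · constructor
    · refine ⟨π₀, fun j => by by_cases h : g j 1 ≤ g j 0 <;> simp [hπ₀, h], ?_⟩
      rw [Finset.sum_congr rfl fun j _ => (hπ₀g j).symm]
    · rintro v ⟨π, hπ, rfl⟩
      refine Finset.sum_le_sum fun j _ => key j (π j) ?_
      rcases hπ j with h | h <;> simp [h]
end

section
/- Let X ⊆ {0,1}^n be a nonempty set of feasible solutions, let [n] be partitioned into regions P_1, …, P_K, and let U be the locally budgeted uncertainty set given by c̲ ∈ ℝ^n, d ≥ 0 and Γ ≥ 0. Then the robust optimal value decomposes into 2^K nominal subproblems: min_{x∈X} max_{c∈U} Σ_i c_i x_i = min_{Π ⊆ [K]} [ Σ_{j∈Π} Γ_j + min_{x∈X} ( Σ_{j∈Π} Σ_{i∈P_j} c̲_i x_i + Σ_{j∈[K]∖Π} Σ_{i∈P_j} (c̲_i + d_i) x_i ) ] (Theorem 1 of the paper, mathematical content). -/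
open Finset

private lemma fiberSplit {n K : ℕ} (reg : Fin n → Fin K) (P : Finset (Fin K)) (h : Fin n → ℝ) :
    ∑ i ∈ univ.filter (fun i => reg i ∈ P), h i
      = ∑ j ∈ P, ∑ i ∈ univ.filter (fun i => reg i = j), h i := by
  simp only [Finset.sum_filter]
  rw [Finset.sum_comm]
  refine Finset.sum_congr rfl fun i _ => ?_
  rw [Finset.sum_ite_eq P (reg i) (fun _ => h i)]

/-- mathematical content of Theorem 1 of the paper. The min-max
robust counterpart over a locally budgeted uncertainty set decomposes into `2^K`
nominal subproblems, one for each subset `Π ⊆ [K]`: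
`min_{x∈X} max_{c∈U} cᵀx = min_{Π⊆[K]} [ ∑_{j∈Π} Γⱼ +
 min_{x∈X} (∑_{j∈Π} ∑_{i∈Pⱼ} c̲ᵢ xᵢ + ∑_{j∉Π} ∑_{i∈Pⱼ} (c̲ᵢ+dᵢ) xᵢ) ]`. -/
theorem robust_decomposition_two_pow_K
    (n K : ℕ) (reg : Fin n → Fin K)
    (c d : Fin n → ℝ) (Γ : Fin K → ℝ)
    (hd : ∀ i, 0 ≤ d i) (hΓ : ∀ j, 0 ≤ Γ j)
    (X : Set (Fin n → ℝ)) (hX : X.Nonempty)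
    (hXbin : ∀ x ∈ X, ∀ i, x i = 0 ∨ x i = 1) :
    ∃ m : ℝ,
      IsLeast
        {v : ℝ | ∃ x ∈ X,
          IsGreatest
            {w : ℝ | ∃ δ : Fin n → ℝ,
              (∀ i, 0 ≤ δ i) ∧ (∀ i, δ i ≤ d i) ∧
              (∀ j : Fin K, ∑ i ∈ univ.filter (fun i => reg i = j), δ i ≤ Γ j) ∧
              w = ∑ i, (c i + δ i) * x i} v} m ∧
      IsLeast
        {v : ℝ | ∃ (P : Finset (Fin K)) (x : Fin n → ℝ), x ∈ X ∧
          v = ∑ j ∈ P, Γ j +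
            (∑ i ∈ univ.filter (fun i => reg i ∈ P), c i * x i +
             ∑ i ∈ univ.filter (fun i => reg i ∉ P), (c i + d i) * x i)} m := by
  classical
  -- the per-region "deviation mass" and the exact worst-case value function
  set S : Fin K → (Fin n → ℝ) → ℝ :=
    fun j x => ∑ i ∈ univ.filter (fun i => reg i = j), d i * x i with hSdef
  set f : (Fin n → ℝ) → ℝ :=
    fun x => ∑ i, c i * x i + ∑ j, min (Γ j) (S j x) with hfdef
  -- basic facts for binary vectors
  have hx01 : ∀ x ∈ X, (∀ i, 0 ≤ x i) ∧ (∀ i, x i ≤ 1) ∧ (∀ i, x i * x i = x i) := by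
    intro x hxX
    refine ⟨fun i => ?_, fun i => ?_, fun i => ?_⟩ <;>
      rcases hXbin x hxX i with h | h <;> rw [h] <;> norm_num
  have hS0 : ∀ x ∈ X, ∀ j, 0 ≤ S j x := by
    intro x hxX j
    exact Finset.sum_nonneg fun i _ => mul_nonneg (hd i) ((hx01 x hxX).1 i)
  -- the inner maximization is attained, with value `f x`
  have hGreat : ∀ x ∈ X, IsGreatest
      {w : ℝ | ∃ δ : Fin n → ℝ,
        (∀ i, 0 ≤ δ i) ∧ (∀ i, δ i ≤ d i) ∧
        (∀ j : Fin K, ∑ i ∈ univ.filter (fun i => reg i = j), δ i ≤ Γ j) ∧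
        w = ∑ i, (c i + δ i) * x i} (f x) := by
    intro x hxX
    obtain ⟨hx0, hx1, hxsq⟩ := hx01 x hxX
    have hSx : ∀ j, 0 ≤ S j x := hS0 x hxX
    set t : Fin K → ℝ := fun j => if S j x ≤ Γ j then 1 else Γ j / S j x with htdef
    have ht0 : ∀ j, 0 ≤ t j := by
      intro j
      by_cases h : S j x ≤ Γ j <;> simp only [htdef, h, if_true, if_false]
      · norm_num
      · exact div_nonneg (hΓ j) (hSx j)
    have ht1 : ∀ j, t j ≤ 1 := by
      intro j
      by_cases h : S j x ≤ Γ j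
      · simp [htdef, h]
      · simp only [htdef, h, if_false]
        push_neg at h
        exact le_of_lt ((div_lt_one (lt_of_le_of_lt (hΓ j) h)).mpr h)
    have htS : ∀ j, t j * S j x = min (Γ j) (S j x) := by
      intro j
      by_cases h : S j x ≤ Γ j <;> simp only [htdef, h, if_true, if_false]
      · rw [one_mul, min_eq_right h]
      · push_neg at h
        have hpos : (0:ℝ) < S j x := lt_of_le_of_lt (hΓ j) h
        rw [div_mul_cancel₀ _ (ne_of_gt hpos), min_eq_left (le_of_lt h)]
    set δ : Fin n → ℝ := fun i => t (reg i) * (d i * x i) with hδdef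
    have hδ0 : ∀ i, 0 ≤ δ i := fun i =>
      mul_nonneg (ht0 _) (mul_nonneg (hd i) (hx0 i))
    have hδsum : ∀ j, ∑ i ∈ univ.filter (fun i => reg i = j), δ i = min (Γ j) (S j x) := by
      intro j
      rw [← htS j, hSdef]
      simp only
      rw [Finset.mul_sum]
      refine Finset.sum_congr rfl fun i hi => ?_
      rw [Finset.mem_filter] at hi
      simp only [hδdef]
      rw [hi.2]
    constructor
    · refine ⟨δ, hδ0, fun i => ?_, fun j => ?_, ?_⟩
      · calc δ i ≤ 1 * (d i * x i) :=
              mul_le_mul_of_nonneg_right (ht1 _) (mul_nonneg (hd i) (hx0 i))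
          _ = d i * x i := one_mul _
          _ ≤ d i * 1 := mul_le_mul_of_nonneg_left (hx1 i) (hd i)
          _ = d i := mul_one _
      · rw [hδsum j]; exact min_le_left _ _
      · have hδx : ∀ i, δ i * x i = δ i := by
          intro i
          have : δ i * x i = t (reg i) * (d i * (x i * x i)) := by ring
          rw [this, hxsq i]
        have : ∑ i, (c i + δ i) * x i = ∑ i, c i * x i + ∑ i, δ i * x i := by
          rw [← Finset.sum_add_distrib]
          exact Finset.sum_congr rfl fun i _ => by ring
        rw [this]
        simp only [hδx]
        have hfib : ∑ i, δ i = ∑ j, ∑ i ∈ univ.filter (fun i => reg i = j), δ i :=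
          (Finset.sum_fiberwise univ reg δ).symm
        rw [hfib]
        simp only [hδsum, hfdef]
    · rintro w ⟨ε, hε0, hεd, hεΓ, rfl⟩
      have hsplit : ∑ i, (c i + ε i) * x i = ∑ i, c i * x i + ∑ i, ε i * x i := by
        rw [← Finset.sum_add_distrib]
        exact Finset.sum_congr rfl fun i _ => by ring
      rw [hsplit, hfdef]
      have hfib : ∑ i, ε i * x i
          = ∑ j, ∑ i ∈ univ.filter (fun i => reg i = j), ε i * x i :=
        (Finset.sum_fiberwise univ reg (fun i => ε i * x i)).symm
      refine add_le_add_right ?_ _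
      rw [hfib]
      refine Finset.sum_le_sum fun j _ => le_min ?_ ?_
      · calc ∑ i ∈ univ.filter (fun i => reg i = j), ε i * x i
            ≤ ∑ i ∈ univ.filter (fun i => reg i = j), ε i := by
              refine Finset.sum_le_sum fun i _ => ?_
              calc ε i * x i ≤ ε i * 1 := mul_le_mul_of_nonneg_left (hx1 i) (hε0 i)
                _ = ε i := mul_one _
          _ ≤ Γ j := hεΓ j
      · refine Finset.sum_le_sum fun i _ => ?_
        exact mul_le_mul_of_nonneg_right (hεd i) (hx0 i)
  -- rewriting the candidate values of the decomposed problem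
  have hg : ∀ (P : Finset (Fin K)) (x : Fin n → ℝ),
      ∑ j ∈ P, Γ j +
        (∑ i ∈ univ.filter (fun i => reg i ∈ P), c i * x i +
         ∑ i ∈ univ.filter (fun i => reg i ∉ P), (c i + d i) * x i)
      = ∑ i, c i * x i + (∑ j ∈ P, Γ j + ∑ j ∈ Pᶜ, S j x) := by
    intro P x
    have h1 : ∑ i ∈ univ.filter (fun i => reg i ∉ P), (c i + d i) * x i
        = ∑ i ∈ univ.filter (fun i => reg i ∉ P), c i * x i
          + ∑ i ∈ univ.filter (fun i => reg i ∉ P), d i * x i := by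
      rw [← Finset.sum_add_distrib]
      exact Finset.sum_congr rfl fun i _ => by ring
    have h2 : ∑ i ∈ univ.filter (fun i => reg i ∈ P), c i * x i
        + ∑ i ∈ univ.filter (fun i => reg i ∉ P), c i * x i = ∑ i, c i * x i :=
      Finset.sum_filter_add_sum_filter_not univ _ _
    have hfilter : univ.filter (fun i => reg i ∉ P) = univ.filter (fun i => reg i ∈ Pᶜ) := by
      refine Finset.filter_congr fun i _ => ?_
      simp [Finset.mem_compl]
    have h3 : ∑ i ∈ univ.filter (fun i => reg i ∉ P), d i * x i = ∑ j ∈ Pᶜ, S j x := by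
      rw [hfilter, fiberSplit reg Pᶜ (fun i => d i * x i)]
    rw [h1, h3]
    rw [hSdef]
    linarith [h2]
  -- lower bound and attainment of the outer minimization over subsets
  have hmin_le : ∀ x ∈ X, ∀ P : Finset (Fin K),
      ∑ j, min (Γ j) (S j x) ≤ ∑ j ∈ P, Γ j + ∑ j ∈ Pᶜ, S j x := by
    intro x hxX P
    rw [← Finset.sum_add_sum_compl P (fun j => min (Γ j) (S j x))]
    exact add_le_add (Finset.sum_le_sum fun j _ => min_le_left _ _)
      (Finset.sum_le_sum fun j _ => min_le_right _ _)
  have hmin_eq : ∀ x ∈ X, ∃ P : Finset (Fin K),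
      ∑ j ∈ P, Γ j + ∑ j ∈ Pᶜ, S j x = ∑ j, min (Γ j) (S j x) := by
    intro x hxX
    refine ⟨univ.filter (fun j => Γ j ≤ S j x), ?_⟩
    rw [← Finset.sum_add_sum_compl (univ.filter (fun j => Γ j ≤ S j x))
      (fun j => min (Γ j) (S j x))]
    congr 1
    · refine Finset.sum_congr rfl fun j hj => ?_
      rw [Finset.mem_filter] at hj
      rw [min_eq_left hj.2]
    · refine Finset.sum_congr rfl fun j hj => ?_
      rw [Finset.mem_compl, Finset.mem_filter] at hj
      push_neg at hj
      rw [min_eq_right (le_of_lt (hj (Finset.mem_univ j)))]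
  -- X is finite, so a minimizer of f over X exists
  have hXfin : X.Finite := by
    refine Set.Finite.subset
      (Set.Finite.pi (fun i : Fin n => (Set.finite_singleton (1:ℝ)).insert 0)) ?_
    intro x hx
    simp only [Set.mem_pi, Set.mem_univ, forall_true_left, Set.mem_insert_iff,
      Set.mem_singleton_iff]
    exact fun i => hXbin x hx i
  obtain ⟨x₀, hx₀X, hx₀min⟩ := Set.exists_min_image X f hXfin hX
  refine ⟨f x₀, ⟨⟨x₀, hx₀X, hGreat x₀ hx₀X⟩, ?_⟩, ⟨?_, ?_⟩⟩
  · rintro v ⟨x, hxX, hvG⟩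
    have : f x = v := (hGreat x hxX).unique hvG
    rw [← this]
    exact hx₀min x hxX
  · obtain ⟨P, hP⟩ := hmin_eq x₀ hx₀X
    refine ⟨P, x₀, hx₀X, ?_⟩
    rw [hg P x₀, hP]
  · rintro v ⟨P, x, hxX, rfl⟩
    rw [hg P x]
    calc f x₀ ≤ f x := hx₀min x hxX
      _ ≤ ∑ i, c i * x i + (∑ j ∈ P, Γ j + ∑ j ∈ Pᶜ, S j x) := by
          rw [hfdef]
          exact add_le_add_right (hmin_le x hxX P) _
end

section
/- Let G = (V, E) be a finite graph with at least one edge and k ∈ ℕ. Consider the robust representative selection instance whose ground set is the set of incidences { (v, e) : v ∈ V, e ∈ E, v ∈ e }, with one part T_e = { (u, e), (v, e) } for each edge e = {u, v} and requirement p_e = 1, with regions P_v = { (v, e) : e ∈ E, v ∈ e } for each v ∈ V, and uncertainty parameters c̲ = 0, d = 1, Γ_v = 1 for all v ∈ V. Then G has a vertex cover of size at most k if and only if there exists a feasible selection (choosing exactly one incidence per edge) whose robust value over the locally budgeted uncertainty set is at most k. -/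
open Finset

/-- The ground set of the representative selection instance built from a graph:
incidences `(e, v)` with `e` an edge of `G` and `v` an endpoint of `e`. -/
def GraphIncidence {V : Type*} [Fintype V] [DecidableEq V]
    (G : SimpleGraph V) [DecidableRel G.Adj] : Type _ :=
  {p : Sym2 V × V // p.1 ∈ G.edgeFinset ∧ p.2 ∈ p.1}

instance {V : Type*} [Fintype V] [DecidableEq V]
    (G : SimpleGraph V) [DecidableRel G.Adj] : Fintype (GraphIncidence G) :=
  Subtype.fintype _

lemma greatest_lemma {V : Type*} [Fintype V] [DecidableEq V]
    (G : SimpleGraph V) [DecidableRel G.Adj]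
    (x : GraphIncidence G → ℝ) (hx : ∀ i, x i = 0 ∨ x i = 1) :
    IsGreatest
      {w : ℝ | ∃ δ : GraphIncidence G → ℝ,
        (∀ i, 0 ≤ δ i) ∧ (∀ i, δ i ≤ 1) ∧
        (∀ v : V, ∑ i ∈ univ.filter (fun i : GraphIncidence G => i.1.2 = v), δ i ≤ 1) ∧
        w = ∑ i, δ i * x i}
      ((univ.filter fun v : V => ∃ i : GraphIncidence G, i.1.2 = v ∧ x i = 1).card : ℝ) := by
  classical
  set F : V → Finset (GraphIncidence G) :=
    fun v => univ.filter (fun i : GraphIncidence G => i.1.2 = v ∧ x i = 1) with hF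
  have hx01 : ∀ i, x i = if x i = 1 then (1:ℝ) else 0 := by
    intro i; rcases hx i with h | h <;> simp [h]
  have hxnn : ∀ i, 0 ≤ x i := by intro i; rcases hx i with h | h <;> simp [h]
  have hxle : ∀ i, x i ≤ 1 := by intro i; rcases hx i with h | h <;> simp [h]
  -- fiber sum of x equals card of F v
  have hfib : ∀ v : V,
      ∑ i ∈ univ.filter (fun i : GraphIncidence G => i.1.2 = v), x i = ((F v).card : ℝ) := by
    intro v
    rw [hF]
    calc ∑ i ∈ univ.filter (fun i : GraphIncidence G => i.1.2 = v), x i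
        = ∑ i ∈ univ.filter (fun i : GraphIncidence G => i.1.2 = v),
            (if x i = 1 then (1:ℝ) else 0) := by
          exact Finset.sum_congr rfl (fun i _ => hx01 i)
      _ = (((univ.filter (fun i : GraphIncidence G => i.1.2 = v)).filter
            (fun i => x i = 1)).card : ℝ) := by rw [Finset.sum_boole]
      _ = _ := by rw [Finset.filter_filter]
  have hused : (univ.filter fun v : V => ∃ i : GraphIncidence G, i.1.2 = v ∧ x i = 1)
      = univ.filter (fun v => (F v).card ≠ 0) := by
    apply Finset.filter_congr
    intro v _
    simp [hF, ← Finset.nonempty_iff_ne_empty, Finset.filter_nonempty_iff, Finset.card_eq_zero]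
  constructor
  · -- membership
    refine ⟨fun i => x i / ((F i.1.2).card : ℝ), ?_, ?_, ?_, ?_⟩
    · intro i; exact div_nonneg (hxnn i) (Nat.cast_nonneg _)
    · intro i
      show x i / ((F i.1.2).card : ℝ) ≤ 1
      rcases hx i with h | h
      · simp [h]
      · have hmem : i ∈ F i.1.2 := by simp [hF, h]
        have hpos : 0 < ((F i.1.2).card : ℝ) := by
          exact_mod_cast Finset.card_pos.mpr ⟨i, hmem⟩
        rw [h, div_le_one hpos]
        exact_mod_cast Finset.card_pos.mpr ⟨i, hmem⟩
    · intro v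
      have : ∑ i ∈ univ.filter (fun i : GraphIncidence G => i.1.2 = v),
          x i / ((F i.1.2).card : ℝ)
          = (∑ i ∈ univ.filter (fun i : GraphIncidence G => i.1.2 = v), x i)
            / ((F v).card : ℝ) := by
        rw [Finset.sum_div]
        refine Finset.sum_congr rfl ?_
        intro i hi
        rw [Finset.mem_filter] at hi
        rw [hi.2]
      rw [this, hfib]
      rcases eq_or_ne ((F v).card : ℝ) 0 with h | h
      · simp [h]
      · rw [div_self h]
    · have hterm : ∀ i, x i / ((F i.1.2).card : ℝ) * x i = x i / ((F i.1.2).card : ℝ) := by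
        intro i; rcases hx i with h | h <;> simp [h]
      rw [Finset.sum_congr rfl (fun i _ => hterm i)]
      rw [← Finset.sum_fiberwise univ (fun i : GraphIncidence G => i.1.2)
        (fun i => x i / ((F i.1.2).card : ℝ))]
      have : ∀ v : V, ∑ i ∈ univ.filter (fun i : GraphIncidence G => i.1.2 = v),
          x i / ((F i.1.2).card : ℝ) = if (F v).card ≠ 0 then (1:ℝ) else 0 := by
        intro v
        have : ∑ i ∈ univ.filter (fun i : GraphIncidence G => i.1.2 = v),
            x i / ((F i.1.2).card : ℝ)
            = (∑ i ∈ univ.filter (fun i : GraphIncidence G => i.1.2 = v), x i)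
              / ((F v).card : ℝ) := by
          rw [Finset.sum_div]
          refine Finset.sum_congr rfl ?_
          intro i hi
          rw [Finset.mem_filter] at hi
          rw [hi.2]
        rw [this, hfib]
        rcases eq_or_ne ((F v).card) 0 with h | h
        · simp [h]
        · have : ((F v).card : ℝ) ≠ 0 := Nat.cast_ne_zero.mpr h
          rw [div_self this, if_pos h]
      rw [Finset.sum_congr rfl (fun v _ => this v), Finset.sum_ite, Finset.sum_const,
        Finset.sum_const, hused]
      simp
  · -- upper bound
    rintro w ⟨δ, hnn, hle, hreg, rfl⟩
    rw [← Finset.sum_fiberwise univ (fun i : GraphIncidence G => i.1.2)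
      (fun i => δ i * x i)]
    rw [hused]
    calc ∑ v : V, ∑ i ∈ univ.filter (fun i : GraphIncidence G => i.1.2 = v), δ i * x i
        ≤ ∑ v : V, (if (F v).card ≠ 0 then (1:ℝ) else 0) := by
          refine Finset.sum_le_sum ?_
          intro v _
          rcases eq_or_ne ((F v).card) 0 with h | h
          · rw [if_neg (not_not.mpr h)]
            have hz : ∀ i ∈ univ.filter (fun i : GraphIncidence G => i.1.2 = v),
                δ i * x i = 0 := by
              intro i hi
              rw [Finset.mem_filter] at hi
              rcases hx i with h' | h'
              · rw [h', mul_zero]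
              · exfalso
                have : i ∈ F v := by simp [hF, hi.2, h']
                exact Finset.card_ne_zero.mpr ⟨i, this⟩ h
            rw [Finset.sum_eq_zero hz]
          · rw [if_pos h]
            calc ∑ i ∈ univ.filter (fun i : GraphIncidence G => i.1.2 = v), δ i * x i
                ≤ ∑ i ∈ univ.filter (fun i : GraphIncidence G => i.1.2 = v), δ i := by
                  refine Finset.sum_le_sum ?_
                  intro i _
                  calc δ i * x i ≤ δ i * 1 := mul_le_mul_of_nonneg_left (hxle i) (hnn i)
                    _ = δ i := mul_one _
              _ ≤ 1 := hreg v
      _ = ((univ.filter (fun v : V => (F v).card ≠ 0)).card : ℝ) := by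
          rw [Finset.sum_ite, Finset.sum_const, Finset.sum_const]
          simp

/-- reduction of Theorem 2 of the paper. `G` has a vertex cover
of size at most `k` iff the robust representative selection instance built from `G`
(one part `T_e` per edge with requirement 1, one region `P_v` per vertex,
`c̲ = 0`, `d = 1`, `Γ = 1`) has a feasible selection of robust value at most `k`. -/
theorem vertex_cover_iff_robust_selection
    {V : Type*} [Fintype V] [DecidableEq V]
    (G : SimpleGraph V) [DecidableRel G.Adj]
    (hE : G.edgeFinset.Nonempty) (k : ℕ) :
    (∃ S : Finset V, S.card ≤ k ∧ ∀ e ∈ G.edgeFinset, ∃ v ∈ S, v ∈ e) ↔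
    (∃ x : GraphIncidence G → ℝ,
      (∀ i, x i = 0 ∨ x i = 1) ∧
      (∀ e ∈ G.edgeFinset,
        (univ.filter (fun i : GraphIncidence G => i.1.1 = e ∧ x i = 1)).card = 1) ∧
      ∃ r : ℝ,
        IsGreatest
          {w : ℝ | ∃ δ : GraphIncidence G → ℝ,
            (∀ i, 0 ≤ δ i) ∧ (∀ i, δ i ≤ 1) ∧
            (∀ v : V, ∑ i ∈ univ.filter (fun i : GraphIncidence G => i.1.2 = v), δ i ≤ 1) ∧
            w = ∑ i, δ i * x i} r ∧
        r ≤ k) := by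
  classical
  constructor
  · rintro ⟨S, hScard, hScov⟩
    obtain ⟨e0, he0⟩ := hE
    haveI : Nonempty V := ⟨(Quot.out e0).1⟩
    set pick : Sym2 V → V :=
      fun e => if h : ∃ v ∈ S, v ∈ e then h.choose else Classical.arbitrary V with hpick
    have hpickS : ∀ e ∈ G.edgeFinset, pick e ∈ S ∧ pick e ∈ e := by
      intro e he
      have h := hScov e he
      obtain ⟨h1, h2⟩ := h.choose_spec
      rw [hpick]
      simp only [dif_pos h]
      exact ⟨h1, h2⟩
    set x : GraphIncidence G → ℝ :=
      fun i => if i.1.2 = pick i.1.1 then 1 else 0 with hxdef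
    have hx : ∀ i, x i = 0 ∨ x i = 1 := by
      intro i
      rw [hxdef]
      by_cases h : i.1.2 = pick i.1.1 <;> simp [h]
    have hx1 : ∀ i : GraphIncidence G, x i = 1 ↔ i.1.2 = pick i.1.1 := by
      intro i
      rw [hxdef]
      by_cases h : i.1.2 = pick i.1.1 <;> simp [h]
    refine ⟨x, hx, ?_, ?_⟩
    · intro e he
      rw [Finset.card_eq_one]
      refine ⟨⟨(e, pick e), he, (hpickS e he).2⟩, ?_⟩
      ext i
      simp only [Finset.mem_filter, Finset.mem_univ, true_and, Finset.mem_singleton]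
      erw [Finset.mem_singleton]
      constructor
      · rintro ⟨h1, h2⟩
        rw [hx1] at h2
        apply Subtype.ext
        apply Prod.ext
        · exact h1
        · rw [h2, h1]
      · rintro rfl
        exact ⟨rfl, (hx1 _).mpr rfl⟩
    · refine ⟨((univ.filter fun v : V => ∃ i : GraphIncidence G, i.1.2 = v ∧ x i = 1).card : ℝ),
        greatest_lemma G x hx, ?_⟩
      have hsub : (univ.filter fun v : V => ∃ i : GraphIncidence G, i.1.2 = v ∧ x i = 1) ⊆ S := by
        intro v hv
        rw [Finset.mem_filter] at hv
        obtain ⟨i, hiv, hxi⟩ := hv.2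
        rw [hx1] at hxi
        rw [← hiv, hxi]
        exact (hpickS i.1.1 i.2.1).1
      have := (Finset.card_le_card hsub).trans hScard
      exact_mod_cast this
  · rintro ⟨x, hx, hfeas, r, hgr, hrk⟩
    refine ⟨univ.filter fun v : V => ∃ i : GraphIncidence G, i.1.2 = v ∧ x i = 1, ?_, ?_⟩
    · have hmem := (greatest_lemma G x hx).1
      have := hgr.2 hmem
      have := this.trans hrk
      exact_mod_cast this
    · intro e he
      have h1 := hfeas e he
      have hpos : 0 < (univ.filter (fun i : GraphIncidence G => i.1.1 = e ∧ x i = 1)).card := by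
        omega
      obtain ⟨i, hi⟩ := Finset.card_pos.mp hpos
      rw [Finset.mem_filter] at hi
      refine ⟨i.1.2, ?_, ?_⟩
      · rw [Finset.mem_filter]
        exact ⟨Finset.mem_univ _, i, rfl, hi.2.2⟩
      · rw [← hi.2.1]
        exact i.2.2
end

section
/- Let V be a finite nonempty ground set and {V_s}_{s∈S} a finite family of subsets with ∪_{s∈S} V_s = V, and let k ∈ ℕ. Consider the robust representative selection instance whose ground set is { (v, s) : s ∈ S, v ∈ V_s }, with one part T_v = { (v, s) : s ∈ S, v ∈ V_s } for each v ∈ V and requirement p_v = 1, with one region P_s = { (v, s) : v ∈ V_s } for each s ∈ S, and uncertainty parameters c̲ = 0, d = 1, Γ_s = 1 for all s ∈ S. Then there exists a set cover C ⊆ S with |C| ≤ k (i.e. ∪_{s∈C} V_s = V) if and only if there exists a feasible selection (choosing exactly one element from each T_v) whose robust value is at most k (the reduction of Theorem 4 of the paper). -/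
open Finset Function

/-- Key lemma: for a selection given by a choice function `f` (select `(v, f v)`
for each `v`), the robust value is exactly the number of regions used, i.e.
`(univ.image f).card`. -/
lemma key_isGreatest {V ι : Type*} [Fintype V] [DecidableEq V] [Nonempty V]
    [Fintype ι] [DecidableEq ι]
    (Vs : ι → Finset V) (f : V → ι) (hf : ∀ v, v ∈ Vs (f v)) :
    IsGreatest
      {w : ℝ | ∃ δ : {p : V × ι // p.1 ∈ Vs p.2} → ℝ,
        (∀ i, 0 ≤ δ i) ∧ (∀ i, δ i ≤ 1) ∧
        (∀ s : ι,
          ∑ i ∈ univ.filter (fun i : {p : V × ι // p.1 ∈ Vs p.2} => i.1.2 = s), δ i ≤ 1) ∧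
        w = ∑ i, δ i * (if i.1.2 = f i.1.1 then (1:ℝ) else 0)}
      ((univ.image f).card : ℝ) := by
  classical
  set g : ι → V := Function.invFun f with hg
  constructor
  · -- membership: achieve the value
    refine ⟨fun i => if i.1.1 = g (f i.1.1) ∧ i.1.2 = f i.1.1 then (1:ℝ) else 0,
      ?_, ?_, ?_, ?_⟩
    · intro i; dsimp only; split <;> norm_num
    · intro i; dsimp only; split <;> norm_num
    · intro s
      have : ∑ i ∈ univ.filter (fun i : {p : V × ι // p.1 ∈ Vs p.2} => i.1.2 = s),
          (if i.1.1 = g (f i.1.1) ∧ i.1.2 = f i.1.1 then (1:ℝ) else 0)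
          = ((univ.filter (fun i : {p : V × ι // p.1 ∈ Vs p.2} => i.1.2 = s)).filter
              (fun i => i.1.1 = g (f i.1.1) ∧ i.1.2 = f i.1.1)).card := by
        simp [Finset.sum_boole]
      rw [this]
      have h1 : ((univ.filter (fun i : {p : V × ι // p.1 ∈ Vs p.2} => i.1.2 = s)).filter
          (fun i => i.1.1 = g (f i.1.1) ∧ i.1.2 = f i.1.1)).card ≤ 1 := by
        rw [Finset.card_le_one]
        intro a ha b hb
        simp only [Finset.mem_filter, Finset.mem_univ, true_and] at ha hb
        obtain ⟨has, ha1, ha2⟩ := ha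
        obtain ⟨hbs, hb1, hb2⟩ := hb
        apply Subtype.ext
        apply Prod.ext
        · rw [ha1, hb1, ← ha2, ← hb2, has, hbs]
        · rw [has, hbs]
      exact_mod_cast h1
    · -- value equals card of image
      have heq : ∀ i : {p : V × ι // p.1 ∈ Vs p.2},
          (if i.1.1 = g (f i.1.1) ∧ i.1.2 = f i.1.1 then (1:ℝ) else 0)
            * (if i.1.2 = f i.1.1 then (1:ℝ) else 0)
          = (if i.1.1 = g (f i.1.1) ∧ i.1.2 = f i.1.1 then (1:ℝ) else 0) := by
        intro i
        by_cases h : i.1.1 = g (f i.1.1) ∧ i.1.2 = f i.1.1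
        · rw [if_pos h, if_pos h.2, one_mul]
        · rw [if_neg h, zero_mul]
      rw [show (∑ i : {p : V × ι // p.1 ∈ Vs p.2},
          (if i.1.1 = g (f i.1.1) ∧ i.1.2 = f i.1.1 then (1:ℝ) else 0)
            * (if i.1.2 = f i.1.1 then (1:ℝ) else 0))
          = ∑ i : {p : V × ι // p.1 ∈ Vs p.2},
            (if i.1.1 = g (f i.1.1) ∧ i.1.2 = f i.1.1 then (1:ℝ) else 0) from
        Finset.sum_congr rfl (fun i _ => heq i)]
      rw [show (∑ i : {p : V × ι // p.1 ∈ Vs p.2},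
          (if i.1.1 = g (f i.1.1) ∧ i.1.2 = f i.1.1 then (1:ℝ) else 0))
          = ((univ.filter (fun i : {p : V × ι // p.1 ∈ Vs p.2} =>
              i.1.1 = g (f i.1.1) ∧ i.1.2 = f i.1.1)).card : ℝ) by
        simp [Finset.sum_boole]]
      congr 1
      symm
      apply Finset.card_bij (fun (i : {p : V × ι // p.1 ∈ Vs p.2}) _ => i.1.2)
      · intro a ha
        simp only [Finset.mem_filter, Finset.mem_univ, true_and] at ha
        simp only [Finset.mem_image, Finset.mem_univ, true_and]
        exact ⟨a.1.1, ha.2.symm⟩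
      · intro a ha b hb hab
        simp only [Finset.mem_filter, Finset.mem_univ, true_and] at ha hb
        apply Subtype.ext
        apply Prod.ext
        · rw [ha.1, hb.1, ← ha.2, ← hb.2, hab]
        · exact hab
      · intro s hs
        simp only [Finset.mem_image, Finset.mem_univ, true_and] at hs
        obtain ⟨v, hv⟩ := hs
        have hgs : f (g s) = s := by
          rw [hg]; exact Function.invFun_eq ⟨v, hv⟩
        have hmem : (g s) ∈ Vs s := by have := hf (g s); rwa [hgs] at this
        have hmf : (⟨(g s, s), hmem⟩ : {p : V × ι // p.1 ∈ Vs p.2}) ∈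
            univ.filter (fun i : {p : V × ι // p.1 ∈ Vs p.2} =>
              i.1.1 = g (f i.1.1) ∧ i.1.2 = f i.1.1) := by
          simp only [Finset.mem_filter, Finset.mem_univ, true_and]
          exact ⟨by rw [hgs], by rw [hgs]⟩
        exact ⟨⟨(g s, s), hmem⟩, hmf, rfl⟩
  · -- upper bound
    rintro w ⟨δ, hδ0, hδ1, hδs, rfl⟩
    have step1 : ∑ i : {p : V × ι // p.1 ∈ Vs p.2},
        δ i * (if i.1.2 = f i.1.1 then (1:ℝ) else 0)
        = ∑ i ∈ univ.filter (fun i : {p : V × ι // p.1 ∈ Vs p.2} => i.1.2 = f i.1.1), δ i := by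
      rw [Finset.sum_filter]
      apply Finset.sum_congr rfl
      intro i _
      split <;> simp
    rw [step1]
    have step2 : ∑ i ∈ univ.filter (fun i : {p : V × ι // p.1 ∈ Vs p.2} => i.1.2 = f i.1.1), δ i
        ≤ ∑ s ∈ univ.image f,
            ∑ i ∈ univ.filter (fun i : {p : V × ι // p.1 ∈ Vs p.2} => i.1.2 = s), δ i := by
      rw [← Finset.sum_biUnion]
      · apply Finset.sum_le_sum_of_subset_of_nonneg
        · intro i hi
          simp only [Finset.mem_filter, Finset.mem_univ, true_and] at hi
          simp only [Finset.mem_biUnion, Finset.mem_image, Finset.mem_univ, true_and,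
            Finset.mem_filter]
          exact ⟨f i.1.1, ⟨i.1.1, rfl⟩, hi⟩
        · intro i _ _; exact hδ0 i
      · intro a _ b _ hab
        simp only [Function.onFun]
        rw [Finset.disjoint_left]
        intro i hia hib
        simp only [Finset.mem_filter, Finset.mem_univ, true_and] at hia hib
        exact hab (hia.symm.trans hib)
    calc ∑ i ∈ univ.filter (fun i : {p : V × ι // p.1 ∈ Vs p.2} => i.1.2 = f i.1.1), δ i
        ≤ ∑ s ∈ univ.image f,
            ∑ i ∈ univ.filter (fun i : {p : V × ι // p.1 ∈ Vs p.2} => i.1.2 = s), δ i := step2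
      _ ≤ ∑ _s ∈ univ.image f, (1:ℝ) := Finset.sum_le_sum (fun s _ => hδs s)
      _ = ((univ.image f).card : ℝ) := by simp

/-- reduction of Theorem 4 of the paper. -/
theorem set_cover_iff_robust_selection
    {V ι : Type*} [Fintype V] [DecidableEq V] [Nonempty V]
    [Fintype ι] [DecidableEq ι]
    (Vs : ι → Finset V) (hcov : ∀ v : V, ∃ s : ι, v ∈ Vs s) (k : ℕ) :
    (∃ C : Finset ι, C.card ≤ k ∧ ∀ v : V, ∃ s ∈ C, v ∈ Vs s) ↔
    (∃ x : {p : V × ι // p.1 ∈ Vs p.2} → ℝ,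
      (∀ i, x i = 0 ∨ x i = 1) ∧
      (∀ v : V,
        (univ.filter (fun i : {p : V × ι // p.1 ∈ Vs p.2} => i.1.1 = v ∧ x i = 1)).card = 1) ∧
      ∃ r : ℝ,
        IsGreatest
          {w : ℝ | ∃ δ : {p : V × ι // p.1 ∈ Vs p.2} → ℝ,
            (∀ i, 0 ≤ δ i) ∧ (∀ i, δ i ≤ 1) ∧
            (∀ s : ι,
              ∑ i ∈ univ.filter (fun i : {p : V × ι // p.1 ∈ Vs p.2} => i.1.2 = s), δ i ≤ 1) ∧
            w = ∑ i, δ i * x i} r ∧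
        r ≤ k) := by
  classical
  constructor
  · rintro ⟨C, hCk, hC⟩
    choose f hfC hf using hC
    refine ⟨fun i => if i.1.2 = f i.1.1 then (1:ℝ) else 0, ?_, ?_, ?_⟩
    · intro i; dsimp only; by_cases h : i.1.2 = f i.1.1
      · right; rw [if_pos h]
      · left; rw [if_neg h]
    · intro v
      have : univ.filter (fun i : {p : V × ι // p.1 ∈ Vs p.2} =>
          i.1.1 = v ∧ (if i.1.2 = f i.1.1 then (1:ℝ) else 0) = 1)
          = {⟨(v, f v), hf v⟩} := by
        ext i
        simp only [Finset.mem_filter, Finset.mem_univ, true_and, Finset.mem_singleton]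
        constructor
        · rintro ⟨h1, h2⟩
          have h3 : i.1.2 = f i.1.1 := by
            by_contra hc
            rw [if_neg hc] at h2
            exact zero_ne_one h2
          apply Subtype.ext
          apply Prod.ext
          · exact h1
          · rw [h3, h1]
        · rintro rfl
          exact ⟨rfl, by rw [if_pos rfl]⟩
      rw [this, Finset.card_singleton]
    · refine ⟨((univ.image f).card : ℝ), key_isGreatest Vs f hf, ?_⟩
      have hsub : univ.image f ⊆ C := by
        intro s hs
        simp only [Finset.mem_image, Finset.mem_univ, true_and] at hs
        obtain ⟨v, hv⟩ := hs
        rw [← hv]; exact hfC v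
      have : (univ.image f).card ≤ k := le_trans (Finset.card_le_card hsub) hCk
      exact_mod_cast this
  · rintro ⟨x, hx01, hx1, r, hgr, hrk⟩
    -- extract the choice function from the feasible selection
    have hsel : ∀ v : V, ∃ i : {p : V × ι // p.1 ∈ Vs p.2},
        univ.filter (fun i : {p : V × ι // p.1 ∈ Vs p.2} => i.1.1 = v ∧ x i = 1) = {i} :=
      fun v => Finset.card_eq_one.mp (hx1 v)
    choose iv hiv using hsel
    have hivmem : ∀ v, (iv v).1.1 = v ∧ x (iv v) = 1 := by
      intro v
      have : iv v ∈ univ.filter (fun i : {p : V × ι // p.1 ∈ Vs p.2} => i.1.1 = v ∧ x i = 1) := by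
        rw [hiv v]; exact Finset.mem_singleton_self _
      simpa using this
    set f : V → ι := fun v => (iv v).1.2 with hfdef
    have hf : ∀ v, v ∈ Vs (f v) := by
      intro v
      have h1 := (hivmem v).1
      have h2 := (iv v).2
      rw [hfdef]
      rwa [h1] at h2
    have hxval : x = fun i => if i.1.2 = f i.1.1 then (1:ℝ) else 0 := by
      funext i
      by_cases h : i.1.2 = f i.1.1
      · rw [if_pos h]
        have : i = iv i.1.1 := by
          apply Subtype.ext
          apply Prod.ext
          · exact (hivmem i.1.1).1.symm
          · exact h
        rw [this]; exact (hivmem i.1.1).2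
      · rw [if_neg h]
        rcases hx01 i with h0 | h1
        · exact h0
        · exfalso
          have : i ∈ univ.filter
              (fun j : {p : V × ι // p.1 ∈ Vs p.2} => j.1.1 = i.1.1 ∧ x j = 1) := by
            simp [h1]
          rw [hiv i.1.1] at this
          rw [Finset.mem_singleton] at this
          exact h (congrArg (fun j : {p : V × ι // p.1 ∈ Vs p.2} => j.1.2) this)
    subst hxval
    have hgr' := key_isGreatest Vs f hf
    have hreq : ((univ.image f).card : ℝ) = r := hgr'.unique hgr
    refine ⟨univ.image f, ?_, ?_⟩
    · have : ((univ.image f).card : ℝ) ≤ k := hreq ▸ hrk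
      exact_mod_cast this
    · intro v
      exact ⟨f v, Finset.mem_image_of_mem f (Finset.mem_univ v), hf v⟩
end

section
/- Let φ be a 3-CNF formula with variables x_1, …, x_ñ and clauses C_1, …, C_m̃ (each clause a list of three literals). In the instance of the robust representative selection problem constructed from φ — ground set consisting of elements e_i^T, e_i^F for each variable i ∈ [ñ] and e_j^1, e_j^2, e_j^3 for each clause j ∈ [m̃]; parts T_i = {e_i^T, e_i^F} for i ∈ [ñ] and T_{ñ+j} = {e_j^1, e_j^2, e_j^3} for j ∈ [m̃], all with requirement 1; regions P_i^T and P_i^F for each variable i, where e_i^T ∈ P_i^T, e_i^F ∈ P_i^F, and e_j^r ∈ P_i^T if the r-th literal of clause j is x_i and e_j^r ∈ P_i^F if it is ¬x_i; uncertainty parameters c̲ = 0, d = 1, Γ = 1 — every feasible selection has robust value at least ñ. -/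
open Finset

/-- In the robust representative selection instance constructed
from a 3-CNF formula `φ` (with `nn` variables and `mm` clauses; ground set
`(Fin nn × Bool) ⊕ (Fin mm × Fin 3)` where `Sum.inl (i, b)` is the variable-gadget
element `e_i^T`/`e_i^F` and `Sum.inr (j, r)` is the clause element `e_j^r`; parts
given by `Sum.map Prod.fst Prod.fst`, all with requirement 1; regions `P_i^T`,
`P_i^F` indexed by `Fin nn × Bool`, where element `Sum.inl (i,b)` lies in region
`(i,b)` and `Sum.inr (j,r)` lies in the region of its literal `φ j r`;
`c̲ = 0`, `d = 1`, `Γ = 1`), every feasible selection has robust value at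
least `nn`. -/
theorem sat_instance_robust_value_lower_bound
    (nn mm : ℕ) (φ : Fin mm → Fin 3 → Fin nn × Bool)
    (x : (Fin nn × Bool) ⊕ (Fin mm × Fin 3) → ℝ)
    (hxbin : ∀ g, x g = 0 ∨ x g = 1)
    (hfeas : ∀ t : Fin nn ⊕ Fin mm,
      (univ.filter (fun g : (Fin nn × Bool) ⊕ (Fin mm × Fin 3) =>
        Sum.map Prod.fst Prod.fst g = t ∧ x g = 1)).card = 1)
    (r : ℝ)
    (hr : IsGreatest
      {w : ℝ | ∃ δ : (Fin nn × Bool) ⊕ (Fin mm × Fin 3) → ℝ,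
        (∀ g, 0 ≤ δ g) ∧ (∀ g, δ g ≤ 1) ∧
        (∀ q : Fin nn × Bool,
          ∑ g ∈ univ.filter (fun g : (Fin nn × Bool) ⊕ (Fin mm × Fin 3) =>
            Sum.elim id (fun p => φ p.1 p.2) g = q), δ g ≤ 1) ∧
        w = ∑ g, δ g * x g} r) :
    (nn : ℝ) ≤ r := by
  classical
  set δ : (Fin nn × Bool) ⊕ (Fin mm × Fin 3) → ℝ :=
    Sum.elim (fun p => x (Sum.inl p)) (fun _ => 0) with hδ
  have hx01 : ∀ g, 0 ≤ x g ∧ x g ≤ 1 := fun g => by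
    rcases hxbin g with h | h <;> simp [h]
  have key : ∀ i : Fin nn, ∑ b : Bool, x (Sum.inl (i, b)) = 1 := by
    intro i
    have h := hfeas (Sum.inl i)
    have hset : univ.filter (fun g : (Fin nn × Bool) ⊕ (Fin mm × Fin 3) =>
          Sum.map Prod.fst Prod.fst g = Sum.inl i ∧ x g = 1)
        = (univ.filter (fun b : Bool => x (Sum.inl (i, b)) = 1)).image
            (fun b => Sum.inl (i, b)) := by
      ext g
      simp only [mem_filter, mem_univ, true_and, mem_image]
      constructor
      · rintro ⟨h1, h2⟩
        rcases g with p | q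
        · have hp : p.1 = i := by simpa using h1
          exact ⟨p.2, by rw [← hp, Prod.mk.eta]; exact h2, by rw [← hp, Prod.mk.eta]⟩
        · simp [Sum.map] at h1
      · rintro ⟨b, hb, rfl⟩
        exact ⟨rfl, hb⟩
    rw [hset, Finset.card_image_of_injective _ (by intro a b hab; simpa using hab)] at h
    have hsum : ∑ b : Bool, x (Sum.inl (i, b))
        = ((univ.filter (fun b : Bool => x (Sum.inl (i, b)) = 1)).card : ℝ) := by
      rw [Finset.card_filter]
      push_cast
      refine Finset.sum_congr rfl fun b _ => ?_
      rcases hxbin (Sum.inl (i, b)) with h' | h' <;> simp [h']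
    rw [hsum, h]; norm_num
  have hmem : (nn : ℝ) ∈ {w : ℝ | ∃ δ : (Fin nn × Bool) ⊕ (Fin mm × Fin 3) → ℝ,
        (∀ g, 0 ≤ δ g) ∧ (∀ g, δ g ≤ 1) ∧
        (∀ q : Fin nn × Bool,
          ∑ g ∈ univ.filter (fun g : (Fin nn × Bool) ⊕ (Fin mm × Fin 3) =>
            Sum.elim id (fun p => φ p.1 p.2) g = q), δ g ≤ 1) ∧
        w = ∑ g, δ g * x g} := by
    refine ⟨δ, ?_, ?_, ?_, ?_⟩
    · rintro (p | q) <;> simp [hδ, (hx01 _).1]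
    · rintro (p | q) <;> simp [hδ, (hx01 _).2]
    · intro q
      have hEq : ∑ g ∈ univ.filter (fun g : (Fin nn × Bool) ⊕ (Fin mm × Fin 3) =>
            Sum.elim id (fun p => φ p.1 p.2) g = q), δ g = x (Sum.inl q) := by
        rw [Finset.sum_filter, Fintype.sum_sum_type]
        simp [hδ]
      rw [hEq]; exact (hx01 _).2
    · have hprod : ∑ g, δ g * x g = ∑ p : Fin nn × Bool, x (Sum.inl p) := by
        rw [Fintype.sum_sum_type]
        simp only [hδ, Sum.elim_inl, Sum.elim_inr, zero_mul, Finset.sum_const_zero, add_zero]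
        refine Finset.sum_congr rfl fun p _ => ?_
        rcases hxbin (Sum.inl p) with h' | h' <;> simp [h']
      rw [hprod, Fintype.sum_prod_type]
      rw [Finset.sum_congr rfl fun i _ => key i]
      simp
  exact hr.2 hmem
end

section
/- Let φ be a 3-CNF formula with variables x_1, …, x_ñ and clauses C_1, …, C_m̃. Consider the robust representative selection instance constructed from φ — ground set consisting of elements e_i^T, e_i^F for each variable i ∈ [ñ] and e_j^1, e_j^2, e_j^3 for each clause j ∈ [m̃]; parts T_i = {e_i^T, e_i^F} for i ∈ [ñ] and T_{ñ+j} = {e_j^1, e_j^2, e_j^3} for j ∈ [m̃], all with requirement 1; regions P_i^T and P_i^F for each variable i, where e_i^T ∈ P_i^T, e_i^F ∈ P_i^F, and e_j^r ∈ P_i^T if the r-th literal of clause j is x_i and e_j^r ∈ P_i^F if it is ¬x_i; uncertainty parameters c̲ = 0, d = 1, Γ = 1. Then φ is satisfiable if and only if the minimum robust value over feasible selections equals ñ (equivalently, is at most ñ). -/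
open Finset

private theorem aux_ite_one {c : Prop} [Decidable c] :
    ((if c then (1:ℝ) else 0) = 1) ↔ c := by
  split_ifs with h <;> simp [h]

/-- Upper bound: if every selected element lies in a region of the form `(i, α i)`,
then the robust value is at most `nn`. -/
private theorem upper_aux (nn mm : ℕ) (φ : Fin mm → Fin 3 → Fin nn × Bool)
    (x δ : (Fin nn × Bool) ⊕ (Fin mm × Fin 3) → ℝ) (α : Fin nn → Bool)
    (hx01 : ∀ g, x g = 0 ∨ x g = 1)
    (hsel : ∀ g, x g = 1 → Sum.elim id (fun p => φ p.1 p.2) g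
        = ((Sum.elim id (fun p => φ p.1 p.2) g).1,
            α (Sum.elim id (fun p => φ p.1 p.2) g).1))
    (h0 : ∀ g, 0 ≤ δ g)
    (hreg : ∀ q : Fin nn × Bool,
      ∑ g ∈ univ.filter (fun g : (Fin nn × Bool) ⊕ (Fin mm × Fin 3) =>
        Sum.elim id (fun p => φ p.1 p.2) g = q), δ g ≤ 1) :
    ∑ g, δ g * x g ≤ nn := by
  classical
  have hfib := Finset.sum_fiberwise (univ : Finset ((Fin nn × Bool) ⊕ (Fin mm × Fin 3)))
      (fun g => (Sum.elim id (fun p => φ p.1 p.2) g).1) (fun g => δ g * x g)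
  rw [← hfib]
  have hle : ∀ i : Fin nn,
      ∑ g ∈ univ.filter (fun g : (Fin nn × Bool) ⊕ (Fin mm × Fin 3) =>
        (Sum.elim id (fun p => φ p.1 p.2) g).1 = i), δ g * x g ≤ 1 := by
    intro i
    have e1 : ∑ g ∈ univ.filter (fun g : (Fin nn × Bool) ⊕ (Fin mm × Fin 3) =>
          (Sum.elim id (fun p => φ p.1 p.2) g).1 = i), δ g * x g
        = ∑ g ∈ (univ.filter (fun g : (Fin nn × Bool) ⊕ (Fin mm × Fin 3) =>
            (Sum.elim id (fun p => φ p.1 p.2) g).1 = i)).filter (fun g => x g = 1),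
            δ g * x g := by
      refine (Finset.sum_filter_of_ne ?_).symm
      intro g _ h
      rcases hx01 g with h' | h'
      · exact absurd (by rw [h', mul_zero]) h
      · exact h'
    have e2 : ∑ g ∈ (univ.filter (fun g : (Fin nn × Bool) ⊕ (Fin mm × Fin 3) =>
            (Sum.elim id (fun p => φ p.1 p.2) g).1 = i)).filter (fun g => x g = 1),
            δ g * x g
        = ∑ g ∈ (univ.filter (fun g : (Fin nn × Bool) ⊕ (Fin mm × Fin 3) =>
            (Sum.elim id (fun p => φ p.1 p.2) g).1 = i)).filter (fun g => x g = 1),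
            δ g := by
      refine Finset.sum_congr rfl fun g hg => ?_
      rw [(Finset.mem_filter.mp hg).2, mul_one]
    have e3 : ∑ g ∈ (univ.filter (fun g : (Fin nn × Bool) ⊕ (Fin mm × Fin 3) =>
            (Sum.elim id (fun p => φ p.1 p.2) g).1 = i)).filter (fun g => x g = 1),
            δ g
        ≤ ∑ g ∈ univ.filter (fun g : (Fin nn × Bool) ⊕ (Fin mm × Fin 3) =>
            Sum.elim id (fun p => φ p.1 p.2) g = (i, α i)), δ g := by
      refine Finset.sum_le_sum_of_subset_of_nonneg ?_ (fun g _ _ => h0 g)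
      intro g hg
      simp only [Finset.mem_filter, Finset.mem_univ, true_and] at hg ⊢
      obtain ⟨hkey, hx1⟩ := hg
      rw [hsel g hx1, hkey]
    calc _ = _ := e1
      _ = _ := e2
      _ ≤ _ := e3
      _ ≤ 1 := hreg (i, α i)
  calc ∑ i : Fin nn, ∑ g ∈ univ.filter (fun g : (Fin nn × Bool) ⊕ (Fin mm × Fin 3) =>
        (Sum.elim id (fun p => φ p.1 p.2) g).1 = i), δ g * x g
      ≤ ∑ _i : Fin nn, (1:ℝ) := Finset.sum_le_sum fun i _ => hle i
    _ = nn := by simp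

/-- reduction of Theorem 3 of the paper. A 3-CNF formula `φ`
(given as `mm` clauses of three literals each, a literal being a pair
`(i, b) : Fin nn × Bool` meaning `x_i` if `b = true` and `¬x_i` if `b = false`)
is satisfiable iff the robust representative selection instance constructed from
`φ` (ground set `(Fin nn × Bool) ⊕ (Fin mm × Fin 3)`, parts
`Sum.map Prod.fst Prod.fst` with requirement 1, regions indexed by
`Fin nn × Bool` via `Sum.elim id (fun p => φ p.1 p.2)`, and `c̲ = 0`, `d = 1`,
`Γ = 1`) has a feasible selection of robust value at most `nn` (which then
equals the minimum possible value `nn`). -/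
theorem sat_iff_robust_selection_value_eq_n
    (nn mm : ℕ) (φ : Fin mm → Fin 3 → Fin nn × Bool) :
    (∃ α : Fin nn → Bool, ∀ j : Fin mm, ∃ r : Fin 3, α (φ j r).1 = (φ j r).2) ↔
    (∃ x : (Fin nn × Bool) ⊕ (Fin mm × Fin 3) → ℝ,
      (∀ g, x g = 0 ∨ x g = 1) ∧
      (∀ t : Fin nn ⊕ Fin mm,
        (univ.filter (fun g : (Fin nn × Bool) ⊕ (Fin mm × Fin 3) =>
          Sum.map Prod.fst Prod.fst g = t ∧ x g = 1)).card = 1) ∧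
      ∃ r : ℝ,
        IsGreatest
          {w : ℝ | ∃ δ : (Fin nn × Bool) ⊕ (Fin mm × Fin 3) → ℝ,
            (∀ g, 0 ≤ δ g) ∧ (∀ g, δ g ≤ 1) ∧
            (∀ q : Fin nn × Bool,
              ∑ g ∈ univ.filter (fun g : (Fin nn × Bool) ⊕ (Fin mm × Fin 3) =>
                Sum.elim id (fun p => φ p.1 p.2) g = q), δ g ≤ 1) ∧
            w = ∑ g, δ g * x g} r ∧
        r ≤ nn) := by
  classical
  constructor
  · rintro ⟨α, hα⟩
    choose ch hch using hα
    refine ⟨fun g => Sum.elim (fun p => if α p.1 = p.2 then (1:ℝ) else 0)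
        (fun p => if p.2 = ch p.1 then (1:ℝ) else 0) g, ?_, ?_, (nn : ℝ), ⟨?_, ?_⟩, le_refl _⟩
    · rintro (p | p) <;> dsimp <;> split_ifs <;> simp
    · rintro (i | j)
      · rw [Finset.card_eq_one]
        refine ⟨Sum.inl (i, α i), ?_⟩
        ext g
        rcases g with ⟨i', b'⟩ | ⟨j', t'⟩
        · simp only [Finset.mem_filter, Finset.mem_univ, true_and, Sum.map_inl,
            Sum.elim_inl, Finset.mem_singleton, Sum.inl.injEq, Prod.mk.injEq,
            aux_ite_one]
          constructor
          · rintro ⟨hi, hb⟩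
            exact ⟨hi, hb.symm ▸ congrArg α hi⟩
          · rintro ⟨hi, hb⟩
            subst hi; subst hb; exact ⟨rfl, rfl⟩
        · simp
      · rw [Finset.card_eq_one]
        refine ⟨Sum.inr (j, ch j), ?_⟩
        ext g
        rcases g with ⟨i', b'⟩ | ⟨j', t'⟩
        · simp
        · simp only [Finset.mem_filter, Finset.mem_univ, true_and, Sum.map_inr,
            Sum.elim_inr, Finset.mem_singleton, Sum.inr.injEq, Prod.mk.injEq,
            aux_ite_one]
          constructor
          · rintro ⟨hj, ht⟩
            exact ⟨hj, ht.trans (congrArg ch hj)⟩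
          · rintro ⟨hj, ht⟩
            subst hj; subst ht; exact ⟨rfl, rfl⟩
    · -- membership : nn is attained
      refine ⟨fun g => Sum.elim (fun p => if α p.1 = p.2 then (1:ℝ) else 0)
          (fun _ => 0) g, ?_, ?_, ?_, ?_⟩
      · rintro (p | p) <;> dsimp <;> (try split_ifs) <;> norm_num
      · rintro (p | p) <;> dsimp <;> (try split_ifs) <;> norm_num
      · intro q
        have hpt : ∀ g ∈ univ.filter (fun g : (Fin nn × Bool) ⊕ (Fin mm × Fin 3) =>
            Sum.elim id (fun p => φ p.1 p.2) g = q),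
            Sum.elim (fun p : Fin nn × Bool => if α p.1 = p.2 then (1:ℝ) else 0)
              (fun _ => (0:ℝ)) g ≤ (if g = Sum.inl q then (1:ℝ) else 0) := by
          intro g hg
          rcases g with p | p
          · have hp : p = q := by simpa using (Finset.mem_filter.mp hg).2
            subst hp
            simp only [Sum.elim_inl, if_pos rfl]
            split_ifs <;> norm_num
          · simp only [Sum.elim_inr]
            split_ifs <;> norm_num
        calc _ ≤ ∑ g ∈ univ.filter (fun g : (Fin nn × Bool) ⊕ (Fin mm × Fin 3) =>
              Sum.elim id (fun p => φ p.1 p.2) g = q),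
              (if g = Sum.inl q then (1:ℝ) else 0) := Finset.sum_le_sum hpt
          _ = if Sum.inl q ∈ univ.filter (fun g : (Fin nn × Bool) ⊕ (Fin mm × Fin 3) =>
              Sum.elim id (fun p => φ p.1 p.2) g = q) then (1:ℝ) else 0 :=
            Finset.sum_ite_eq' _ _ _
          _ ≤ 1 := by split_ifs <;> norm_num
      · rw [Fintype.sum_sum_type, Fintype.sum_prod_type]
        have h2 : ∀ p : Fin mm × Fin 3,
            Sum.elim (fun p : Fin nn × Bool => if α p.1 = p.2 then (1:ℝ) else 0)
              (fun _ : Fin mm × Fin 3 => (0:ℝ)) (Sum.inr p) *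
            (Sum.elim (fun p : Fin nn × Bool => if α p.1 = p.2 then (1:ℝ) else 0)
              (fun p : Fin mm × Fin 3 => if p.2 = ch p.1 then (1:ℝ) else 0) (Sum.inr p)) = 0 := by
          intro p; simp
        have h1 : ∀ i' : Fin nn, ∑ b' : Bool,
            Sum.elim (fun p : Fin nn × Bool => if α p.1 = p.2 then (1:ℝ) else 0)
              (fun _ : Fin mm × Fin 3 => (0:ℝ)) (Sum.inl (i', b')) *
            (Sum.elim (fun p : Fin nn × Bool => if α p.1 = p.2 then (1:ℝ) else 0)
              (fun p : Fin mm × Fin 3 => if p.2 = ch p.1 then (1:ℝ) else 0) (Sum.inl (i', b'))) = 1 := by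
          intro i'
          cases h : α i' <;> simp [Fintype.sum_bool, h]
        simp only [h2, Finset.sum_const_zero, add_zero]
        simp only [h1, Finset.sum_const, Finset.card_univ, Fintype.card_fin,
          nsmul_eq_mul, mul_one]
    · -- upper bound
      rintro w ⟨δ, h0, h1, hreg, rfl⟩
      refine upper_aux nn mm φ _ δ α ?_ ?_ h0 hreg
      · rintro (p | p) <;> dsimp <;> split_ifs <;> simp
      · rintro (p | p) hg
        · simp only [Sum.elim_inl] at hg ⊢
          have hp : α p.1 = p.2 := by
            by_contra h; rw [if_neg h] at hg; exact zero_ne_one hg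
          exact Prod.ext_iff.mpr ⟨rfl, by simpa using hp.symm⟩
        · simp only [Sum.elim_inr] at hg ⊢
          have hp : p.2 = ch p.1 := by
            by_contra h; rw [if_neg h] at hg; exact zero_ne_one hg
          have := hch p.1
          rw [← hp] at this
          exact Prod.ext_iff.mpr ⟨rfl, this.symm⟩
  · rintro ⟨x, hx01, hcard, r, ⟨-, hub⟩, hrn⟩
    have hex : ∀ t, ∃ g, Sum.map Prod.fst Prod.fst g = t ∧ x g = 1 := by
      intro t
      obtain ⟨a, ha⟩ := Finset.card_eq_one.mp (hcard t)
      have : a ∈ univ.filter (fun g : (Fin nn × Bool) ⊕ (Fin mm × Fin 3) =>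
          Sum.map Prod.fst Prod.fst g = t ∧ x g = 1) := ha ▸ Finset.mem_singleton_self a
      exact ⟨a, (Finset.mem_filter.mp this).2⟩
    have hvar : ∀ i : Fin nn, ∃ b, x (Sum.inl (i, b)) = 1 := by
      intro i
      obtain ⟨g, hg1, hg2⟩ := hex (Sum.inl i)
      rcases g with ⟨i', b⟩ | p
      · simp only [Sum.map_inl] at hg1
        have : i' = i := by simpa using hg1
        subst this
        exact ⟨b, hg2⟩
      · simp at hg1
    choose α hα using hvar
    have hcl : ∀ j : Fin mm, ∃ t, x (Sum.inr (j, t)) = 1 := by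
      intro j
      obtain ⟨g, hg1, hg2⟩ := hex (Sum.inr j)
      rcases g with p | ⟨j', t⟩
      · simp at hg1
      · simp only [Sum.map_inr] at hg1
        have : j' = j := by simpa using hg1
        subst this
        exact ⟨t, hg2⟩
    choose ch hch using hcl
    refine ⟨α, fun j => ⟨ch j, ?_⟩⟩
    by_contra hne
    set δ : (Fin nn × Bool) ⊕ (Fin mm × Fin 3) → ℝ :=
      fun g => Sum.elim (fun p => if α p.1 = p.2 then (1:ℝ) else 0)
        (fun p => if p = (j, ch j) then (1:ℝ) else 0) g with hδdef
    have hw : ((nn : ℝ) + 1) ∈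
        {w : ℝ | ∃ δ : (Fin nn × Bool) ⊕ (Fin mm × Fin 3) → ℝ,
          (∀ g, 0 ≤ δ g) ∧ (∀ g, δ g ≤ 1) ∧
          (∀ q : Fin nn × Bool,
            ∑ g ∈ univ.filter (fun g : (Fin nn × Bool) ⊕ (Fin mm × Fin 3) =>
              Sum.elim id (fun p => φ p.1 p.2) g = q), δ g ≤ 1) ∧
          (nn : ℝ) + 1 = ∑ g, δ g * x g} := by
      refine ⟨δ, ?_, ?_, ?_, ?_⟩
      · rintro (p | p) <;> simp only [hδdef, Sum.elim_inl, Sum.elim_inr] <;>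
          split_ifs <;> norm_num
      · rintro (p | p) <;> simp only [hδdef, Sum.elim_inl, Sum.elim_inr] <;>
          split_ifs <;> norm_num
      · intro q
        have hpt : ∀ g ∈ univ.filter (fun g : (Fin nn × Bool) ⊕ (Fin mm × Fin 3) =>
            Sum.elim id (fun p => φ p.1 p.2) g = q),
            δ g ≤ (if g = Sum.inl q then δ (Sum.inl q) else 0)
              + (if g = Sum.inr (j, ch j) then δ (Sum.inr (j, ch j)) else 0) := by
          intro g hg
          rcases g with p | p
          · have hp : p = q := by simpa using (Finset.mem_filter.mp hg).2
            subst hp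
            simp
          · by_cases hp : p = (j, ch j)
            · subst hp
              simp
            · have : δ (Sum.inr p) = 0 := by
                simp only [hδdef, Sum.elim_inr, if_neg hp]
              rw [this]
              have hne1 : (Sum.inr p : (Fin nn × Bool) ⊕ (Fin mm × Fin 3)) ≠ Sum.inl q := by
                simp
              have hne2 : (Sum.inr p : (Fin nn × Bool) ⊕ (Fin mm × Fin 3)) ≠
                  Sum.inr (j, ch j) := by simpa using hp
              rw [if_neg hne1, if_neg hne2, add_zero]
        calc ∑ g ∈ univ.filter (fun g : (Fin nn × Bool) ⊕ (Fin mm × Fin 3) =>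
              Sum.elim id (fun p => φ p.1 p.2) g = q), δ g
            ≤ ∑ g ∈ univ.filter (fun g : (Fin nn × Bool) ⊕ (Fin mm × Fin 3) =>
              Sum.elim id (fun p => φ p.1 p.2) g = q),
              ((if g = Sum.inl q then δ (Sum.inl q) else 0)
                + (if g = Sum.inr (j, ch j) then δ (Sum.inr (j, ch j)) else 0)) :=
              Finset.sum_le_sum hpt
          _ = (if Sum.inl q ∈ univ.filter (fun g : (Fin nn × Bool) ⊕ (Fin mm × Fin 3) =>
                Sum.elim id (fun p => φ p.1 p.2) g = q) then δ (Sum.inl q) else 0)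
              + (if Sum.inr (j, ch j) ∈ univ.filter
                  (fun g : (Fin nn × Bool) ⊕ (Fin mm × Fin 3) =>
                Sum.elim id (fun p => φ p.1 p.2) g = q) then δ (Sum.inr (j, ch j)) else 0) := by
              rw [Finset.sum_add_distrib, Finset.sum_ite_eq' _ _ (fun _ => δ (Sum.inl q)),
                Finset.sum_ite_eq' _ _ (fun _ => δ (Sum.inr (j, ch j)))]
          _ ≤ 1 := by
              by_cases hq : φ j (ch j) = q
              · have d1 : δ (Sum.inl q) = 0 := by
                  rw [← hq]
                  simp only [hδdef, Sum.elim_inl]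
                  rw [if_neg hne]
                have d2 : δ (Sum.inr (j, ch j)) = 1 := by
                  simp [hδdef]
                rw [d1, d2]
                split_ifs <;> norm_num
              · have m2 : Sum.inr (j, ch j) ∉ univ.filter
                    (fun g : (Fin nn × Bool) ⊕ (Fin mm × Fin 3) =>
                      Sum.elim id (fun p => φ p.1 p.2) g = q) := by
                  simp [hq]
                rw [if_neg m2, add_zero]
                have d1 : δ (Sum.inl q) ≤ 1 := by
                  simp only [hδdef, Sum.elim_inl]; split_ifs <;> norm_num
                split_ifs <;> [exact d1; norm_num]
      · rw [Fintype.sum_sum_type, Fintype.sum_prod_type]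
        have h1 : ∀ i' : Fin nn,
            ∑ b' : Bool, δ (Sum.inl (i', b')) * x (Sum.inl (i', b')) = 1 := by
          intro i'
          have hx1 := hα i'
          cases h : α i' <;> rw [h] at hx1 <;>
            simp [hδdef, Fintype.sum_bool, h, hx1]
        have h2 : ∑ p : Fin mm × Fin 3, δ (Sum.inr p) * x (Sum.inr p) = 1 := by
          have : ∀ p : Fin mm × Fin 3, δ (Sum.inr p) * x (Sum.inr p)
              = if p = (j, ch j) then x (Sum.inr p) else 0 := by
            intro p
            simp only [hδdef, Sum.elim_inr]
            split_ifs <;> ring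
          rw [Finset.sum_congr rfl fun p _ => this p,
            Finset.sum_ite_eq' _ _ (fun p => x (Sum.inr p))]
          simp [hch j]
        rw [h2]
        rw [Finset.sum_congr rfl fun i' _ => h1 i']
        simp
    have := hub hw
    have hnn : (nn : ℝ) + 1 ≤ (nn : ℝ) := le_trans this hrn
    linarith
end

section
/- Let [n] be partitioned into regions P_1, …, P_K with |P_j| = n_j, let U be the locally budgeted uncertainty set given by c̲ ∈ ℝ^n, d ≥ 0, Γ ≥ 0, let p ≤ n, and let X = { x ∈ {0,1}^n : Σ_{i∈[n]} x_i = p } be the feasible set of the selection problem. For j ∈ [K] and 0 ≤ q ≤ n_j define f_j(q) = min { Σ_{i∈S} c̲_i + min{ Σ_{i∈S} d_i , Γ_j } : S ⊆ P_j, |S| = q }. Then min_{x∈X} max_{c∈U} Σ_i c_i x_i = min { Σ_{j∈[K]} f_j(p_j) : p_j ∈ ℕ, 0 ≤ p_j ≤ n_j for all j, Σ_{j∈[K]} p_j = p }. -/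
open Finset

section Aux

variable {n K : ℕ} (reg : Fin n → Fin K) (c d : Fin n → ℝ) (Γ : Fin K → ℝ)

/-- Value of a selection `S`. -/
noncomputable def RSgval (S : Finset (Fin n)) : ℝ :=
  ∑ j, (∑ i ∈ S.filter (fun i => reg i = j), c i +
    min (∑ i ∈ S.filter (fun i => reg i = j), d i) (Γ j))

lemma RSarith {D G : ℝ} (hD : 0 ≤ D) (hG : 0 ≤ G) :
    D * min 1 (G / D) = min D G := by
  rcases eq_or_lt_of_le hD with h | h
  · simp [← h, min_eq_left hG]
  rcases le_total D G with h2 | h2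
  · rw [min_eq_left (by rwa [le_div_iff₀ h, one_mul]), mul_one, min_eq_left h2]
  · rw [min_eq_right (by rwa [div_le_one h]), mul_div_cancel₀ _ (ne_of_gt h),
      min_eq_right h2]

lemma RSindic_sum (x : Fin n → ℝ) (hx : ∀ i, x i = 0 ∨ x i = 1) (u : Fin n → ℝ) :
    ∑ i, u i * x i = ∑ i ∈ univ.filter (fun i => x i = 1), u i := by
  rw [sum_filter]
  refine Finset.sum_congr rfl fun i _ => ?_
  rcases hx i with h | h <;> simp [h]

lemma RSgreatest (hd : ∀ i, 0 ≤ d i) (hΓ : ∀ j, 0 ≤ Γ j)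
    (x : Fin n → ℝ) (hx : ∀ i, x i = 0 ∨ x i = 1) :
    IsGreatest {w : ℝ | ∃ δ : Fin n → ℝ,
      (∀ i, 0 ≤ δ i) ∧ (∀ i, δ i ≤ d i) ∧
      (∀ j : Fin K, ∑ i ∈ univ.filter (fun i => reg i = j), δ i ≤ Γ j) ∧
      w = ∑ i, (c i + δ i) * x i}
    (RSgval reg c d Γ (univ.filter (fun i => x i = 1))) := by
  set S : Finset (Fin n) := univ.filter (fun i => x i = 1) with hS
  -- fibers of S
  set Sj : Fin K → Finset (Fin n) := fun j => S.filter (fun i => reg i = j) with hSj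
  have hSjP : ∀ j, Sj j ⊆ univ.filter (fun i => reg i = j) := by
    intro j i hi
    simp only [hSj, hS, mem_filter] at hi ⊢
    exact ⟨mem_univ i, hi.2⟩
  set D : Fin K → ℝ := fun j => ∑ i ∈ Sj j, d i with hD
  have hD0 : ∀ j, 0 ≤ D j := fun j => Finset.sum_nonneg fun i _ => hd i
  set t : Fin K → ℝ := fun j => min 1 (Γ j / (D j)) with ht
  have ht0 : ∀ j, 0 ≤ t j := fun j =>
    le_min zero_le_one (div_nonneg (hΓ j) (hD0 j))
  have ht1 : ∀ j, t j ≤ 1 := fun j => min_le_left _ _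
  constructor
  · -- membership : the optimal δ
    refine ⟨fun i => if x i = 1 then d i * t (reg i) else 0, ?_, ?_, ?_, ?_⟩
    · intro i
      dsimp only
      split
      · exact mul_nonneg (hd i) (ht0 _)
      · exact le_refl 0
    · intro i
      dsimp only
      split
      · exact mul_le_of_le_one_right (hd i) (ht1 _)
      · exact hd i
    · intro j
      have hfil : (univ.filter (fun i => reg i = j)).filter (fun i => x i = 1) = Sj j := by
        simp only [hSj, hS, filter_filter]
        exact filter_congr fun i _ => and_comm
      calc ∑ i ∈ univ.filter (fun i => reg i = j),
              (if x i = 1 then d i * t (reg i) else 0)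
          = ∑ i ∈ (univ.filter (fun i => reg i = j)).filter (fun i => x i = 1),
              d i * t (reg i) := (sum_filter _ _).symm
        _ = ∑ i ∈ Sj j, d i * t j := by
            rw [hfil]
            refine Finset.sum_congr rfl fun i hi => ?_
            have : reg i = j := (mem_filter.mp hi).2
            rw [this]
        _ = D j * t j := by rw [hD, sum_mul]
        _ = min (D j) (Γ j) := RSarith (hD0 j) (hΓ j)
        _ ≤ Γ j := min_le_right _ _
    · rw [RSindic_sum x hx, ← hS]
      have key : ∀ j, ∑ i ∈ Sj j, (c i + if x i = 1 then d i * t (reg i) else 0)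
          = ∑ i ∈ Sj j, c i + min (D j) (Γ j) := by
        intro j
        rw [Finset.sum_add_distrib]
        congr 1
        calc ∑ i ∈ Sj j, (if x i = 1 then d i * t (reg i) else 0)
            = ∑ i ∈ Sj j, d i * t j := by
              refine Finset.sum_congr rfl fun i hi => ?_
              simp only [hSj, hS, mem_filter] at hi
              rw [if_pos hi.1.2, hi.2]
          _ = D j * t j := by rw [hD, sum_mul]
          _ = min (D j) (Γ j) := RSarith (hD0 j) (hΓ j)
      rw [← Finset.sum_fiberwise S reg
        (fun i => c i + if x i = 1 then d i * t (reg i) else 0)]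
      rw [RSgval]
      exact (Finset.sum_congr rfl fun j _ => key j).symm
  · -- upper bound
    rintro w ⟨δ, hδ0, hδd, hδΓ, rfl⟩
    rw [RSindic_sum x hx, ← hS,
      ← Finset.sum_fiberwise S reg (fun i => c i + δ i), RSgval]
    refine Finset.sum_le_sum fun j _ => ?_
    rw [Finset.sum_add_distrib]
    refine add_le_add le_rfl (le_min ?_ ?_)
    · exact Finset.sum_le_sum fun i _ => hδd i
    · exact le_trans
        (Finset.sum_le_sum_of_subset_of_nonneg (hSjP j) fun i _ _ => hδ0 i)
        (hδΓ j)

end Aux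

/-- Decomposition of the robust selection problem with locally
budgeted uncertainty: with `f j q` the optimal value of the per-region robust
selection problem selecting `q` items from region `P_j` (with objective
`∑_{i∈S} c̲ᵢ + min(∑_{i∈S} dᵢ, Γⱼ)`), the robust optimum
`min_{x∈X} max_{c∈U} cᵀx` equals
`min { ∑ⱼ f j (pⱼ) : pⱼ ∈ ℕ, pⱼ ≤ |Pⱼ|, ∑ⱼ pⱼ = p }`. -/
theorem robust_selection_decomposition
    (n K : ℕ) (reg : Fin n → Fin K)
    (c d : Fin n → ℝ) (Γ : Fin K → ℝ)
    (hd : ∀ i, 0 ≤ d i) (hΓ : ∀ j, 0 ≤ Γ j)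
    (p : ℕ) (hp : p ≤ n)
    (f : Fin K → ℕ → ℝ)
    (hf : ∀ j : Fin K, ∀ q : ℕ,
      q ≤ (univ.filter (fun i => reg i = j)).card →
      IsLeast
        {v : ℝ | ∃ S : Finset (Fin n), (∀ i ∈ S, reg i = j) ∧ S.card = q ∧
          v = ∑ i ∈ S, c i + min (∑ i ∈ S, d i) (Γ j)} (f j q)) :
    ∃ m : ℝ,
      IsLeast
        {v : ℝ | ∃ x : Fin n → ℝ,
          (∀ i, x i = 0 ∨ x i = 1) ∧ (∑ i, x i = (p : ℝ)) ∧
          IsGreatest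
            {w : ℝ | ∃ δ : Fin n → ℝ,
              (∀ i, 0 ≤ δ i) ∧ (∀ i, δ i ≤ d i) ∧
              (∀ j : Fin K, ∑ i ∈ univ.filter (fun i => reg i = j), δ i ≤ Γ j) ∧
              w = ∑ i, (c i + δ i) * x i} v} m ∧
      IsLeast
        {v : ℝ | ∃ pv : Fin K → ℕ,
          (∀ j, pv j ≤ (univ.filter (fun i => reg i = j)).card) ∧
          (∑ j, pv j = p) ∧
          v = ∑ j, f j (pv j)} m := by
  classical
  set g := RSgval reg c d Γ with hg
  -- the collection of feasible selections
  have hpow : ((univ : Finset (Fin n)).powersetCard p).Nonempty := by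
    obtain ⟨T, _, hT⟩ := Finset.exists_subset_card_eq (s := (univ : Finset (Fin n))) (n := p)
      (by simpa using hp)
    exact ⟨T, by simp [Finset.mem_powersetCard, hT]⟩
  set m := ((univ : Finset (Fin n)).powersetCard p).inf' hpow g with hm
  -- fiber cardinality sum
  have hcard : ∀ S : Finset (Fin n),
      ∑ j, (S.filter (fun i => reg i = j)).card = S.card := by
    intro S
    have h := Finset.sum_fiberwise S reg (fun _ => (1 : ℕ))
    simp only [← card_eq_sum_ones] at h
    exact h
  -- Claim 1: for any S with |S| = p, ∃ pv feasible with ∑ f j (pv j) ≤ g S,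
  -- and ∑ f j (pv j) is itself in the second set.
  have claim1 : ∀ S : Finset (Fin n), S.card = p →
      ∃ pv : Fin K → ℕ,
        (∀ j, pv j ≤ (univ.filter (fun i => reg i = j)).card) ∧
        (∑ j, pv j = p) ∧ (∑ j, f j (pv j) ≤ g S) := by
    intro S hSp
    refine ⟨fun j => (S.filter (fun i => reg i = j)).card, fun j => ?_, ?_, ?_⟩
    · exact Finset.card_le_card (by
        intro i hi
        simp only [mem_filter] at hi ⊢
        exact ⟨mem_univ i, hi.2⟩)
    · rw [hcard S, hSp]
    · rw [hg, RSgval]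
      refine Finset.sum_le_sum fun j _ => ?_
      refine (hf j _ (Finset.card_le_card (by
        intro i hi
        simp only [mem_filter] at hi ⊢
        exact ⟨mem_univ i, hi.2⟩))).2 ?_
      exact ⟨S.filter (fun i => reg i = j),
        fun i hi => (mem_filter.mp hi).2, rfl, rfl⟩
  -- Claim 2: every value in the second set equals g S for some S with |S| = p
  have claim2 : ∀ pv : Fin K → ℕ,
      (∀ j, pv j ≤ (univ.filter (fun i => reg i = j)).card) →
      (∑ j, pv j = p) →
      ∃ S : Finset (Fin n), S.card = p ∧ g S = ∑ j, f j (pv j) := by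
    intro pv hpv1 hpv2
    choose T hT1 hT2 hT3 using fun j => (hf j (pv j) (hpv1 j)).1
    refine ⟨univ.filter (fun i => i ∈ T (reg i)), ?_, ?_⟩
    · have hfib : ∀ j, (univ.filter (fun i => i ∈ T (reg i))).filter
          (fun i => reg i = j) = T j := by
        intro j
        ext i
        simp only [mem_filter, mem_univ, true_and]
        constructor
        · rintro ⟨hi, hj⟩; rwa [hj] at hi
        · intro hi
          have := hT1 j i hi
          exact ⟨by rwa [this], this⟩
      rw [← hcard, ← hpv2]
      exact Finset.sum_congr rfl fun j _ => by rw [hfib j, hT2 j]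
    · have hfib : ∀ j, (univ.filter (fun i => i ∈ T (reg i))).filter
          (fun i => reg i = j) = T j := by
        intro j
        ext i
        simp only [mem_filter, mem_univ, true_and]
        constructor
        · rintro ⟨hi, hj⟩; rwa [hj] at hi
        · intro hi
          have := hT1 j i hi
          exact ⟨by rwa [this], this⟩
      rw [hg, RSgval]
      exact Finset.sum_congr rfl fun j _ => by rw [hfib j, ← hT3 j]
  -- m is a lower bound for the second set
  have hlb2 : ∀ v ∈ {v : ℝ | ∃ pv : Fin K → ℕ,
      (∀ j, pv j ≤ (univ.filter (fun i => reg i = j)).card) ∧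
      (∑ j, pv j = p) ∧ v = ∑ j, f j (pv j)}, m ≤ v := by
    rintro v ⟨pv, hpv1, hpv2, rfl⟩
    obtain ⟨S, hSp, hgS⟩ := claim2 pv hpv1 hpv2
    rw [← hgS]
    exact Finset.inf'_le g (by simp [Finset.mem_powersetCard, hSp])
  -- a selection attaining the minimum
  obtain ⟨S₀, hS₀mem, hS₀⟩ := Finset.exists_mem_eq_inf' hpow g
  have hS₀p : S₀.card = p := (Finset.mem_powersetCard.mp hS₀mem).2
  refine ⟨m, ⟨?_, ?_⟩, ⟨?_, hlb2⟩⟩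
  · -- membership in the first set
    refine ⟨fun i => if i ∈ S₀ then 1 else 0, fun i => ?_, ?_, ?_⟩
    · dsimp only; split <;> simp
    · rw [Finset.sum_ite_mem, Finset.univ_inter, Finset.sum_const, hS₀p]
      simp
    · have hfe : univ.filter (fun i => (if i ∈ S₀ then (1 : ℝ) else 0) = 1) = S₀ := by
        ext i
        simp only [mem_filter, mem_univ, true_and]
        split <;> simp_all
      have := RSgreatest reg c d Γ hd hΓ (fun i => if i ∈ S₀ then (1 : ℝ) else 0)
        (fun i => by split <;> simp)
      rw [hfe, ← hg, ← hS₀] at this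
      exact this
  · -- lower bound for the first set
    rintro v ⟨x, hx, hxsum, hxgr⟩
    have hgr := RSgreatest reg c d Γ hd hΓ x hx
    have hv : v = g (univ.filter (fun i => x i = 1)) := by
      rw [hg]
      exact IsGreatest.unique hxgr hgr
    have hcardx : (univ.filter (fun i => x i = 1)).card = p := by
      have : ∑ i, x i = ((univ.filter (fun i => x i = 1)).card : ℝ) := by
        rw [Finset.card_filter]
        push_cast
        refine Finset.sum_congr rfl fun i _ => ?_
        rcases hx i with h | h <;> simp [h]
      rw [this] at hxsum
      exact_mod_cast hxsum
    rw [hv]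
    exact Finset.inf'_le g (by simp [Finset.mem_powersetCard, hcardx])
  · -- membership in the second set
    obtain ⟨pv, hpv1, hpv2, hle⟩ := claim1 S₀ hS₀p
    refine ⟨pv, hpv1, hpv2, ?_⟩
    have h1 : m ≤ ∑ j, f j (pv j) := hlb2 _ ⟨pv, hpv1, hpv2, rfl⟩
    have h2 : ∑ j, f j (pv j) ≤ m := by rw [hm, hS₀]; exact hle
    linarith
end

section
/- Let G = (V, E) be a finite graph and consider the robust representative selection instance constructed from G (ground set of incidences (v,e) with v ∈ e, parts T_e with requirement 1, regions P_v = { (v,e) : e ∋ v }, and c̲ = 0, d = 1, Γ = 1). If S ⊆ V is a vertex cover of G with |S| = k, then the selection x that picks, for each edge e, an incidence (v, e) with v ∈ S ∩ e (choosing arbitrarily if both endpoints lie in S) is feasible and has robust value at most k. -/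
open Finset

/-- If `S` is a vertex cover of `G` with `|S| = k`, then the
selection that picks, for each edge `e`, an incidence `(e, pick e)` with
`pick e ∈ S ∩ e`, is feasible for the representative selection instance built
from `G` and has robust value (over the locally budgeted uncertainty set with
`c̲ = 0`, `d = 1`, `Γ = 1` and regions `P_v`) at most `k`. -/
theorem vertex_cover_gives_robust_selection
    {V : Type*} [Fintype V] [DecidableEq V]
    (G : SimpleGraph V) [DecidableRel G.Adj]
    (S : Finset V) (k : ℕ) (hS : S.card = k)
    (hcov : ∀ e ∈ G.edgeFinset, ∃ v ∈ S, v ∈ e)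
    (pick : Sym2 V → V)
    (hpick : ∀ e ∈ G.edgeFinset, pick e ∈ e ∧ pick e ∈ S)
    (x : GraphIncidence G → ℝ)
    (hxdef : ∀ i : GraphIncidence G, x i = if i.1.2 = pick i.1.1 then 1 else 0) :
    (∀ e ∈ G.edgeFinset,
      (univ.filter (fun i : GraphIncidence G => i.1.1 = e ∧ x i = 1)).card = 1) ∧
    ∃ r : ℝ,
      IsGreatest
        {w : ℝ | ∃ δ : GraphIncidence G → ℝ,
          (∀ i, 0 ≤ δ i) ∧ (∀ i, δ i ≤ 1) ∧
          (∀ v : V, ∑ i ∈ univ.filter (fun i : GraphIncidence G => i.1.2 = v), δ i ≤ 1) ∧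
          w = ∑ i, δ i * x i} r ∧
      r ≤ k := by
  classical
  have hx1 : ∀ i : GraphIncidence G, x i = 1 ↔ i.1.2 = pick i.1.1 := by
    intro i
    rw [hxdef i]
    constructor
    · intro h
      by_contra hc
      rw [if_neg hc] at h
      norm_num at h
    · intro h
      rw [if_pos h]
  have hx01 : ∀ i : GraphIncidence G, x i = 0 ∨ x i = 1 := by
    intro i; rw [hxdef i]; split <;> simp
  constructor
  · intro e he
    obtain ⟨hpe, hpeS⟩ := hpick e he
    have hfe : (univ.filter (fun i : GraphIncidence G => i.1.1 = e ∧ x i = 1))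
        = {(id ⟨(e, pick e), he, hpe⟩ : GraphIncidence G)} := by
      ext i
      simp only [mem_filter, mem_univ, true_and, mem_singleton]
      constructor
      · rintro ⟨h1, h2⟩
        rw [hx1 i] at h2
        apply Subtype.ext
        apply Prod.ext h1
        rw [h2, h1]; rfl
      · rintro rfl
        exact ⟨rfl, (hx1 _).mpr rfl⟩
    rw [hfe, card_singleton]
  · set A : Finset V := G.edgeFinset.image pick with hA
    have hAS : A ⊆ S := by
      intro v hv
      rw [hA, mem_image] at hv
      obtain ⟨e, he, rfl⟩ := hv
      exact (hpick e he).2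
    set Ev : V → Finset (GraphIncidence G) :=
      fun v => univ.filter (fun i => i.1.2 = v ∧ x i = 1) with hEv
    have hmemEv : ∀ v, v ∈ A ↔ (Ev v).Nonempty := by
      intro v
      constructor
      · intro hv
        rw [hA, mem_image] at hv
        obtain ⟨e, he, rfl⟩ := hv
        refine ⟨⟨(e, pick e), he, (hpick e he).1⟩, ?_⟩
        exact mem_filter.mpr ⟨mem_univ _, rfl, (hx1 _).mpr rfl⟩
      · rintro ⟨i, hi⟩
        simp only [hEv, mem_filter, mem_univ, true_and] at hi
        obtain ⟨h1, h2⟩ := hi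
        rw [hx1 i] at h2
        rw [hA, mem_image]
        exact ⟨i.1.1, i.2.1, by rw [← h2, h1]⟩
    set δ0 : GraphIncidence G → ℝ :=
      fun i => if h : (Ev i.1.2).Nonempty then (if i = h.choose then 1 else 0) else 0
      with hδ0
    have hδ0nn : ∀ i, 0 ≤ δ0 i := by
      intro i; rw [hδ0]; dsimp only; split
      · split <;> norm_num
      · norm_num
    have hδ0le : ∀ i, δ0 i ≤ 1 := by
      intro i; rw [hδ0]; dsimp only; split
      · split <;> norm_num
      · norm_num
    -- per-vertex budget for δ0
    have hδ0loc : ∀ v : V,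
        ∑ i ∈ univ.filter (fun i : GraphIncidence G => i.1.2 = v), δ0 i ≤ 1 := by
      intro v
      by_cases h : (Ev v).Nonempty
      · calc ∑ i ∈ univ.filter (fun i : GraphIncidence G => i.1.2 = v), δ0 i
            ≤ ∑ i ∈ univ.filter (fun i : GraphIncidence G => i.1.2 = v),
                (if i = h.choose then (1:ℝ) else 0) := by
              apply Finset.sum_le_sum
              intro i hi
              simp only [mem_filter, mem_univ, true_and] at hi
              subst hi
              rw [hδ0]
              dsimp only
              rw [dif_pos h]
          _ ≤ 1 := by
              rw [Finset.sum_ite_eq']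
              split <;> norm_num
      · apply le_of_eq_of_le _ (zero_le_one (α := ℝ))
        apply Finset.sum_eq_zero
        intro i hi
        simp only [mem_filter, mem_univ, true_and] at hi
        subst hi
        rw [hδ0]
        dsimp only
        rw [dif_neg h]
    -- the value of δ0
    have hfiber : ∀ (f : GraphIncidence G → ℝ),
        ∑ i : GraphIncidence G, f i
          = ∑ v : V, ∑ i ∈ univ.filter (fun i : GraphIncidence G => i.1.2 = v), f i := by
      intro f
      exact (Finset.sum_fiberwise univ (fun i : GraphIncidence G => i.1.2) f).symm
    have hinner0 : ∀ v : V,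
        ∑ i ∈ univ.filter (fun i : GraphIncidence G => i.1.2 = v), δ0 i * x i
          = if (Ev v).Nonempty then 1 else 0 := by
      intro v
      by_cases h : (Ev v).Nonempty
      · rw [if_pos h]
        have hc := h.choose_spec
        simp only [hEv, mem_filter, mem_univ, true_and] at hc
        have : ∑ i ∈ univ.filter (fun i : GraphIncidence G => i.1.2 = v), δ0 i * x i
            = ∑ i ∈ univ.filter (fun i : GraphIncidence G => i.1.2 = v),
                (if i = h.choose then (1:ℝ) else 0) := by
          apply Finset.sum_congr rfl
          intro i hi
          simp only [mem_filter, mem_univ, true_and] at hi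
          subst hi
          rw [hδ0]
          dsimp only
          rw [dif_pos h]
          by_cases hie : i = h.choose
          · rw [if_pos hie, one_mul, hie]
            exact hc.2
          · rw [if_neg hie, zero_mul]
        rw [this, Finset.sum_ite_eq', if_pos]
        simp only [mem_filter, mem_univ, true_and]
        exact hc.1
      · rw [if_neg h]
        apply Finset.sum_eq_zero
        intro i hi
        simp only [mem_filter, mem_univ, true_and] at hi
        subst hi
        rw [hδ0]
        dsimp only
        rw [dif_neg h, zero_mul]
    have hval0 : ∑ i : GraphIncidence G, δ0 i * x i = (A.card : ℝ) := by
      rw [hfiber (fun i => δ0 i * x i)]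
      calc (∑ v : V, ∑ i ∈ univ.filter (fun i : GraphIncidence G => i.1.2 = v), δ0 i * x i)
          = ∑ v : V, (if (Ev v).Nonempty then (1:ℝ) else 0) := by
            exact Finset.sum_congr rfl (fun v _ => hinner0 v)
        _ = ∑ v : V, (if v ∈ A then (1:ℝ) else 0) := by
            apply Finset.sum_congr rfl
            intro v _
            by_cases hv : v ∈ A
            · rw [if_pos hv, if_pos ((hmemEv v).mp hv)]
            · rw [if_neg hv, if_neg (fun h => hv ((hmemEv v).mpr h))]
        _ = (A.card : ℝ) := by
            rw [Finset.sum_boole, Finset.filter_univ_mem]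
    refine ⟨(A.card : ℝ), ⟨⟨δ0, hδ0nn, hδ0le, hδ0loc, hval0.symm⟩, ?_⟩, ?_⟩
    · rintro w ⟨δ, hnn, hle, hloc, rfl⟩
      rw [hfiber (fun i => δ i * x i)]
      calc (∑ v : V, ∑ i ∈ univ.filter (fun i : GraphIncidence G => i.1.2 = v), δ i * x i)
          ≤ ∑ v : V, (if v ∈ A then (1:ℝ) else 0) := by
            apply Finset.sum_le_sum
            intro v _
            by_cases hv : v ∈ A
            · rw [if_pos hv]
              calc ∑ i ∈ univ.filter (fun i : GraphIncidence G => i.1.2 = v), δ i * x i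
                  ≤ ∑ i ∈ univ.filter (fun i : GraphIncidence G => i.1.2 = v), δ i := by
                    apply Finset.sum_le_sum
                    intro i _
                    rcases hx01 i with h | h
                    · rw [h, mul_zero]; exact hnn i
                    · rw [h, mul_one]
                _ ≤ 1 := hloc v
            · rw [if_neg hv]
              apply le_of_eq
              apply Finset.sum_eq_zero
              intro i hi
              simp only [mem_filter, mem_univ, true_and] at hi
              rcases hx01 i with h | h
              · rw [h, mul_zero]
              · exfalso
                apply hv
                rw [hmemEv v]
                exact ⟨i, by simp only [hEv, mem_filter, mem_univ, true_and]; exact ⟨hi, h⟩⟩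
        _ = (A.card : ℝ) := by rw [Finset.sum_boole, Finset.filter_univ_mem]
    · rw [← hS]
      exact_mod_cast Finset.card_le_card hAS
end

section
/- Let G = (V, E) be a finite graph and consider the robust representative selection instance constructed from G (ground set of incidences (v,e) with v ∈ e, parts T_e with requirement 1, regions P_v = { (v,e) : e ∋ v }, and c̲ = 0, d = 1, Γ = 1). If x is a feasible selection whose robust value is k, then the set S of vertices v such that region P_v contains a selected incidence is a vertex cover of G with |S| = k. -/
open Finset

/-- If `x` is a feasible selection of the representative
selection instance built from `G` whose robust value (over the locally budgeted
uncertainty set with `c̲ = 0`, `d = 1`, `Γ = 1` and regions `P_v`) is `r`, then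
the set `S` of vertices `v` whose region `P_v` contains a selected incidence is
a vertex cover of `G` with `|S| = r`. -/
theorem robust_selection_gives_vertex_cover
    {V : Type*} [Fintype V] [DecidableEq V]
    (G : SimpleGraph V) [DecidableRel G.Adj]
    (x : GraphIncidence G → ℝ)
    (hxbin : ∀ i, x i = 0 ∨ x i = 1)
    (hfeas : ∀ e ∈ G.edgeFinset,
      (univ.filter (fun i : GraphIncidence G => i.1.1 = e ∧ x i = 1)).card = 1)
    (r : ℝ)
    (hr : IsGreatest
      {w : ℝ | ∃ δ : GraphIncidence G → ℝ,
        (∀ i, 0 ≤ δ i) ∧ (∀ i, δ i ≤ 1) ∧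
        (∀ v : V, ∑ i ∈ univ.filter (fun i : GraphIncidence G => i.1.2 = v), δ i ≤ 1) ∧
        w = ∑ i, δ i * x i} r) :
    (∀ e ∈ G.edgeFinset,
      ∃ v ∈ univ.filter (fun v : V => ∃ i : GraphIncidence G, i.1.2 = v ∧ x i = 1),
        v ∈ e) ∧
    ((univ.filter (fun v : V => ∃ i : GraphIncidence G, i.1.2 = v ∧ x i = 1)).card : ℝ)
      = r := by

  classical
  set S : Finset V :=
    univ.filter (fun v : V => ∃ i : GraphIncidence G, i.1.2 = v ∧ x i = 1) with hS
  constructor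
  · intro e he
    obtain ⟨a, ha⟩ := Finset.card_eq_one.mp (hfeas e he)
    have haa : a ∈ univ.filter (fun i : GraphIncidence G => i.1.1 = e ∧ x i = 1) :=
      ha ▸ Finset.mem_singleton_self a
    rw [Finset.mem_filter] at haa
    obtain ⟨-, hae, hax⟩ := haa
    refine ⟨a.1.2, ?_, ?_⟩
    · rw [hS, Finset.mem_filter]
      exact ⟨Finset.mem_univ _, a, rfl, hax⟩
    · have h2 := a.2.2
      rwa [hae] at h2
  · -- the value part
    -- the witness delta
    set δ : GraphIncidence G → ℝ := fun i =>
      if h : ∃ j : GraphIncidence G, j.1.2 = i.1.2 ∧ x j = 1 then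
        (if i = h.choose then 1 else 0) else 0 with hδ
    have hδ01 : ∀ i, δ i = 0 ∨ δ i = 1 := by
      intro i
      rw [hδ]; dsimp only
      split
      · split
        · right; rfl
        · left; rfl
      · left; rfl
    have hδ0 : ∀ i, 0 ≤ δ i := by
      intro i; rcases hδ01 i with h | h <;> rw [h] <;> norm_num
    have hδ1 : ∀ i, δ i ≤ 1 := by
      intro i; rcases hδ01 i with h | h <;> rw [h] <;> norm_num
    have hδx : ∀ i, δ i * x i = δ i := by
      intro i
      rw [hδ]; dsimp only
      split
      · rename_i h
        split
        · rename_i hi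
          have := h.choose_spec.2
          rw [hi, this]; ring
        · ring
      · ring
    have hregion : ∀ v : V,
        ∑ i ∈ univ.filter (fun i : GraphIncidence G => i.1.2 = v), δ i
          = if v ∈ S then 1 else 0 := by
      intro v
      by_cases hv : v ∈ S
      · rw [if_pos hv]
        have hvS : ∃ j : GraphIncidence G, j.1.2 = v ∧ x j = 1 := by
          rw [hS, Finset.mem_filter] at hv; exact hv.2
        have hstep : ∀ i ∈ univ.filter (fun i : GraphIncidence G => i.1.2 = v),
            δ i = if i = hvS.choose then 1 else 0 := by
          intro i hi
          rw [Finset.mem_filter] at hi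
          have hiv : i.1.2 = v := hi.2
          subst hiv
          rw [hδ]; dsimp only; rw [dif_pos hvS]
        rw [Finset.sum_congr rfl hstep, Finset.sum_ite_eq']
        rw [if_pos]
        rw [Finset.mem_filter]
        exact ⟨Finset.mem_univ _, hvS.choose_spec.1⟩
      · rw [if_neg hv]
        have hvS : ¬ ∃ j : GraphIncidence G, j.1.2 = v ∧ x j = 1 := by
          rw [hS, Finset.mem_filter] at hv
          intro h; exact hv ⟨Finset.mem_univ _, h⟩
        refine Finset.sum_eq_zero ?_
        intro i hi
        rw [Finset.mem_filter] at hi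
        have hiv : i.1.2 = v := hi.2
        subst hiv
        rw [hδ]; dsimp only; rw [dif_neg hvS]
    have hcardsum : ∀ f : GraphIncidence G → ℝ,
        ∑ i, f i = ∑ v : V, ∑ i ∈ univ.filter (fun i : GraphIncidence G => i.1.2 = v), f i := by
      intro f
      exact (Finset.sum_fiberwise univ (fun i : GraphIncidence G => i.1.2) f).symm
    have hmem : ((S.card : ℝ)) ∈
        {w : ℝ | ∃ δ : GraphIncidence G → ℝ,
          (∀ i, 0 ≤ δ i) ∧ (∀ i, δ i ≤ 1) ∧
          (∀ v : V, ∑ i ∈ univ.filter (fun i : GraphIncidence G => i.1.2 = v), δ i ≤ 1) ∧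
          w = ∑ i, δ i * x i} := by
      refine ⟨δ, hδ0, hδ1, ?_, ?_⟩
      · intro v
        rw [hregion v]
        split <;> norm_num
      · have : ∑ i, δ i * x i = ∑ i, δ i := by
          exact Finset.sum_congr rfl (fun i _ => hδx i)
        rw [this, hcardsum δ]
        rw [Finset.sum_congr rfl (fun v _ => hregion v)]
        rw [Finset.sum_ite_mem]
        simp [Finset.univ_inter]
    have hub : ∀ w ∈
        {w : ℝ | ∃ δ : GraphIncidence G → ℝ,
          (∀ i, 0 ≤ δ i) ∧ (∀ i, δ i ≤ 1) ∧
          (∀ v : V, ∑ i ∈ univ.filter (fun i : GraphIncidence G => i.1.2 = v), δ i ≤ 1) ∧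
          w = ∑ i, δ i * x i}, w ≤ (S.card : ℝ) := by
      rintro w ⟨ε, hε0, hε1, hεb, rfl⟩
      rw [hcardsum (fun i => ε i * x i)]
      have hbound : ∀ v : V,
          ∑ i ∈ univ.filter (fun i : GraphIncidence G => i.1.2 = v), ε i * x i
            ≤ if v ∈ S then 1 else 0 := by
        intro v
        by_cases hv : v ∈ S
        · rw [if_pos hv]
          calc ∑ i ∈ univ.filter (fun i : GraphIncidence G => i.1.2 = v), ε i * x i
              ≤ ∑ i ∈ univ.filter (fun i : GraphIncidence G => i.1.2 = v), ε i := by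
                refine Finset.sum_le_sum ?_
                intro i _
                have hx1 : x i ≤ 1 := by rcases hxbin i with h | h <;> rw [h] <;> norm_num
                have hx0 : 0 ≤ x i := by rcases hxbin i with h | h <;> rw [h] <;> norm_num
                calc ε i * x i ≤ ε i * 1 := by
                      exact mul_le_mul_of_nonneg_left hx1 (hε0 i)
                  _ = ε i := by ring
            _ ≤ 1 := hεb v
        · rw [if_neg hv]
          have hvS : ¬ ∃ j : GraphIncidence G, j.1.2 = v ∧ x j = 1 := by
            rw [hS, Finset.mem_filter] at hv
            intro h; exact hv ⟨Finset.mem_univ _, h⟩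
          refine le_of_eq (Finset.sum_eq_zero ?_)
          intro i hi
          rw [Finset.mem_filter] at hi
          have hx0 : x i = 0 := by
            rcases hxbin i with h | h
            · exact h
            · exact absurd ⟨i, hi.2, h⟩ hvS
          rw [hx0]; ring
      calc ∑ v : V, ∑ i ∈ univ.filter (fun i : GraphIncidence G => i.1.2 = v), ε i * x i
          ≤ ∑ v : V, if v ∈ S then 1 else 0 := Finset.sum_le_sum (fun v _ => hbound v)
        _ = (S.card : ℝ) := by rw [Finset.sum_ite_mem]; simp [Finset.univ_inter]
    have h1 : (S.card : ℝ) ≤ r := hr.2 hmem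
    have h2 : r ≤ (S.card : ℝ) := hub r hr.1
    linarith
end

section
/- Let φ be a 3-CNF formula with variables x_1, …, x_ñ and clauses C_1, …, C_m̃, and consider the robust representative selection instance constructed from φ (variable-gadget elements e_i^T, e_i^F; clause-gadget elements e_j^1, e_j^2, e_j^3; parts T_i = {e_i^T, e_i^F} and T_{ñ+j} = {e_j^1, e_j^2, e_j^3} with requirement 1; regions P_i^T, P_i^F with e_i^T ∈ P_i^T, e_i^F ∈ P_i^F, and e_j^r placed in P_i^T if the r-th literal of clause j is x_i and in P_i^F if it is ¬x_i; c̲ = 0, d = 1, Γ = 1). If α is a satisfying assignment of φ, then the feasible selection that picks e_i^T when α(x_i) is true and e_i^F when α(x_i) is false, and for each clause j picks a clause element e_j^r whose corresponding literal is true under α, has robust value exactly ñ. -/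
open Finset

/-- Let `α` be a satisfying assignment of a 3-CNF formula `φ`
(clause `j`'s `r`-th literal being the pair `φ j r : Fin nn × Bool`, and
`pick j` a literal of clause `j` that is true under `α`). In the robust
representative selection instance built from `φ`, the selection `x` that picks
`e_i^T` when `α i = true`, `e_i^F` when `α i = false`, and for each clause `j`
the clause element `e_j^{pick j}`, is feasible and has robust value exactly `nn`
(over the locally budgeted uncertainty set with `c̲ = 0`, `d = 1`, `Γ = 1` and
regions indexed by `Fin nn × Bool`). -/
theorem satisfying_assignment_gives_selection
    (nn mm : ℕ) (φ : Fin mm → Fin 3 → Fin nn × Bool)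
    (α : Fin nn → Bool) (pick : Fin mm → Fin 3)
    (hα : ∀ j : Fin mm, α (φ j (pick j)).1 = (φ j (pick j)).2)
    (x : (Fin nn × Bool) ⊕ (Fin mm × Fin 3) → ℝ)
    (hxdef : ∀ g, x g = Sum.elim
      (fun p : Fin nn × Bool => if p.2 = α p.1 then (1 : ℝ) else 0)
      (fun p : Fin mm × Fin 3 => if p.2 = pick p.1 then (1 : ℝ) else 0) g) :
    (∀ t : Fin nn ⊕ Fin mm,
      (univ.filter (fun g : (Fin nn × Bool) ⊕ (Fin mm × Fin 3) =>
        Sum.map Prod.fst Prod.fst g = t ∧ x g = 1)).card = 1) ∧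
    IsGreatest
      {w : ℝ | ∃ δ : (Fin nn × Bool) ⊕ (Fin mm × Fin 3) → ℝ,
        (∀ g, 0 ≤ δ g) ∧ (∀ g, δ g ≤ 1) ∧
        (∀ q : Fin nn × Bool,
          ∑ g ∈ univ.filter (fun g : (Fin nn × Bool) ⊕ (Fin mm × Fin 3) =>
            Sum.elim id (fun p => φ p.1 p.2) g = q), δ g ≤ 1) ∧
        w = ∑ g, δ g * x g} (nn : ℝ) := by
  have hx1 : ∀ g, x g = 1 ↔ Sum.elim (fun p : Fin nn × Bool => p.2 = α p.1)
      (fun p : Fin mm × Fin 3 => p.2 = pick p.1) g := by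
    intro g
    rw [hxdef]
    rcases g with p | p <;> simp <;> split <;> simp_all
  have hx01 : ∀ g, x g = 0 ∨ x g = 1 := by
    intro g
    rw [hxdef]
    rcases g with p | p <;> dsimp <;> split <;> simp
  refine ⟨?_, ?_, ?_⟩
  · -- feasibility
    intro t
    rw [Finset.card_eq_one]
    rcases t with i | j
    · refine ⟨Sum.inl (i, α i), ?_⟩
      ext g
      rcases g with ⟨a, b⟩ | ⟨a, r⟩ <;> simp [hx1] <;> aesop
    · refine ⟨Sum.inr (j, pick j), ?_⟩
      ext g
      rcases g with ⟨a, b⟩ | ⟨a, r⟩ <;> simp [hx1] <;> aesop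
  · -- membership : δ₀ achieves value nn
    refine ⟨Sum.elim (fun p : Fin nn × Bool => if p.2 = α p.1 then (1 : ℝ) else 0)
      (fun _ => 0), ?_, ?_, ?_, ?_⟩
    · rintro (p | p)
      · dsimp; split <;> norm_num
      · simp
    · rintro (p | p)
      · dsimp; split <;> norm_num
      · simp
    · intro q
      calc ∑ g ∈ univ.filter (fun g : (Fin nn × Bool) ⊕ (Fin mm × Fin 3) =>
            Sum.elim id (fun p => φ p.1 p.2) g = q),
            Sum.elim (fun p : Fin nn × Bool => if p.2 = α p.1 then (1 : ℝ) else 0)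
              (fun _ => 0) g
          ≤ ∑ g ∈ univ.filter (fun g : (Fin nn × Bool) ⊕ (Fin mm × Fin 3) =>
            Sum.elim id (fun p => φ p.1 p.2) g = q),
            (if g = Sum.inl q then (1 : ℝ) else 0) := by
            apply Finset.sum_le_sum
            rintro (p | p) hg
            · simp only [Finset.mem_filter, Sum.elim_inl, id] at hg
              obtain ⟨-, rfl⟩ := hg
              simp only [Sum.elim_inl, if_pos rfl]
              split <;> norm_num
            · simp only [Sum.elim_inr]
              split <;> norm_num
        _ ≤ ∑ g : (Fin nn × Bool) ⊕ (Fin mm × Fin 3),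
            (if g = Sum.inl q then (1 : ℝ) else 0) := by
            apply Finset.sum_le_sum_of_subset_of_nonneg (Finset.filter_subset _ _)
            intro g _ _
            split <;> norm_num
        _ = 1 := by rw [Finset.sum_ite_eq' univ (Sum.inl q) (fun _ => (1 : ℝ))]; simp
    · simp only [hxdef]
      rw [Fintype.sum_sum_type]
      simp [Fintype.sum_prod_type, Finset.sum_ite_eq']
  · -- upper bound
    rintro w ⟨δ, h0, h1, hreg, rfl⟩
    set D : Finset (Fin nn × Bool) := univ.filter (fun q => q.2 = α q.1) with hD
    have hDcard : D.card = nn := by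
      have hDeq : D = Finset.univ.image (fun i : Fin nn => (i, α i)) := by
        ext ⟨i, b⟩
        simp only [hD, Finset.mem_filter, Finset.mem_univ, true_and, Finset.mem_image]
        constructor
        · rintro h; exact ⟨i, by simp [h]⟩
        · rintro ⟨a, ha⟩
          obtain ⟨h1', h2'⟩ := Prod.mk.injEq .. ▸ ha
          subst h1'; exact h2'.symm
      rw [hDeq, Finset.card_image_of_injective _ (fun a b h => (Prod.ext_iff.mp h).1),
        Finset.card_univ, Fintype.card_fin]
    have hregion : ∀ g, x g = 1 →
        (Sum.elim id (fun p : Fin mm × Fin 3 => φ p.1 p.2) g) ∈ D := by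
      rintro (p | p) hx
      · have := (hx1 _).1 hx
        simp only [Sum.elim_inl] at this ⊢
        simp [hD, this]
      · have hp : p.2 = pick p.1 := (hx1 _).1 hx
        simp only [Sum.elim_inr, hp]
        simp [hD, (hα p.1).symm]
    calc ∑ g, δ g * x g
        ≤ ∑ g, (if (Sum.elim id (fun p : Fin mm × Fin 3 => φ p.1 p.2) g) ∈ D
            then δ g else 0) := by
          apply Finset.sum_le_sum
          intro g _
          rcases hx01 g with h | h
          · rw [h, mul_zero]
            split
            · exact h0 g
            · exact le_refl 0
          · rw [h, mul_one, if_pos (hregion g h)]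
      _ = ∑ g ∈ univ.filter (fun g : (Fin nn × Bool) ⊕ (Fin mm × Fin 3) =>
            (Sum.elim id (fun p : Fin mm × Fin 3 => φ p.1 p.2) g) ∈ D), δ g := by
          rw [Finset.sum_filter]
      _ = ∑ q ∈ D, ∑ g ∈ univ.filter (fun g : (Fin nn × Bool) ⊕ (Fin mm × Fin 3) =>
            Sum.elim id (fun p => φ p.1 p.2) g = q), δ g := by
          rw [Finset.sum_fiberwise_eq_sum_filter]
      _ ≤ ∑ _q ∈ D, (1 : ℝ) := Finset.sum_le_sum fun q _ => hreg q
      _ = (nn : ℝ) := by rw [Finset.sum_const, hDcard]; simp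
end
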